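/- arXiv:2011.07436 — 3 statements merged into one kernel-verified Lean document; each statement's English description precedes it below -/
import Mathlib

section
/- Let λ be a minuscule weight and u ∈ W^P with u(λ) = λ - Σ_{j=1}^{l} n_j α_j where n_j are nonnegative integers. Then ℓ(u) = Σ_{j=1}^{l} n_j. -/
open scoped InnerProductSpace
noncomputable section

variable {E : Type*} [NormedAddCommGroup E] [InnerProductSpace ℝ E]

/-- The pairing `(x, a^∨) = 2(x,a)/(a,a)` of `x` with the coroot of `a`. -/
def coPair (x a : E) : ℝ := 2 * ⟪x, a⟫_ℝ / ⟪a, a⟫_ℝ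

/-- A (crystallographic, reduced) root system `Δ` in a Euclidean space `E`. -/
structure IsRootSystem (Δ : Set E) : Prop where
  finite : Δ.Finite
  not_zero : (0 : E) ∉ Δ
  span_top : Submodule.span ℝ Δ = ⊤
  reflect_mem : ∀ a ∈ Δ, ∀ b ∈ Δ, b - coPair b a • a ∈ Δ
  integral : ∀ a ∈ Δ, ∀ b ∈ Δ, ∃ z : ℤ, coPair b a = z
  reduced : ∀ a ∈ Δ, ∀ t : ℝ, t • a ∈ Δ → t = 1 ∨ t = -1

/-- `sr` is a system of simple roots (a base) for `Δ`: every root is a sum of simple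
roots with nonnegative integer coefficients, or the negative of such a sum. -/
structure IsBase (Δ : Set E) {l : ℕ} (sr : Fin l → E) : Prop where
  mem : ∀ i, sr i ∈ Δ
  indep : LinearIndependent ℝ sr
  decomp : ∀ a ∈ Δ,
    (∃ c : Fin l → ℕ, a = ∑ i, (c i : ℝ) • sr i) ∨
    (∃ c : Fin l → ℕ, a = -∑ i, (c i : ℝ) • sr i)

/-- `a` is a positive root with respect to the base `sr`. -/
def IsPositiveRoot (Δ : Set E) {l : ℕ} (sr : Fin l → E) (a : E) : Prop :=
  a ∈ Δ ∧ ∃ c : Fin l → ℕ, a = ∑ i, (c i : ℝ) • sr i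

/-- `lam` belongs to the weight lattice: `(lam, a^∨) ∈ ℤ` for every root `a`. -/
def IsIntegralWeight (Δ : Set E) (lam : E) : Prop := ∀ a ∈ Δ, ∃ z : ℤ, coPair lam a = z

/-- `lam` is a dominant weight. -/
def IsDominant (Δ : Set E) {l : ℕ} (sr : Fin l → E) (lam : E) : Prop :=
  IsIntegralWeight Δ lam ∧ ∀ i, 0 ≤ coPair lam (sr i)

/-- `lam` is a minuscule weight: dominant and `(lam, a^∨) ≤ 1` for all positive roots `a`. -/
def IsMinuscule (Δ : Set E) {l : ℕ} (sr : Fin l → E) (lam : E) : Prop :=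
  IsDominant Δ sr lam ∧ ∀ a, IsPositiveRoot Δ sr a → coPair lam a ≤ 1

/-- `g` is the (orthogonal) reflection in the root `a`. -/
def IsReflectionIn (a : E) (g : E ≃ₗ[ℝ] E) : Prop := ∀ x, g x = x - coPair x a • a

/-- `g` is a simple reflection. -/
def IsSimpleReflection (Δ : Set E) {l : ℕ} (sr : Fin l → E) (g : E ≃ₗ[ℝ] E) : Prop :=
  ∃ i, IsReflectionIn (sr i) g

/-- The Weyl group `W`: generated by the reflections in the roots. -/
def weylGroup (Δ : Set E) : Subgroup (E ≃ₗ[ℝ] E) :=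
  Subgroup.closure {g | ∃ a ∈ Δ, IsReflectionIn a g}

/-- The length of `w`: minimal length of an expression of `w` as a product of
simple reflections. -/
def weylLength (Δ : Set E) {l : ℕ} (sr : Fin l → E) (w : E ≃ₗ[ℝ] E) : ℕ :=
  sInf {n | ∃ L : List (E ≃ₗ[ℝ] E), L.length = n ∧
    (∀ g ∈ L, IsSimpleReflection Δ sr g) ∧ L.prod = w}

/-- The parabolic subgroup `W_P` associated to the weight `lam`: generated by the
simple reflections `s_β` with `(lam, β^∨) = 0`. -/
def parabolic (Δ : Set E) {l : ℕ} (sr : Fin l → E) (lam : E) : Subgroup (E ≃ₗ[ℝ] E) :=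
  Subgroup.closure {g | ∃ i, coPair lam (sr i) = 0 ∧ IsReflectionIn (sr i) g}

/-- `u ∈ W^P`: `u` is a minimal length representative of its coset `u W_P`,
i.e. `ℓ(u s_β) > ℓ(u)` for every simple reflection `s_β ∈ W_P`. -/
def IsMinRep (Δ : Set E) {l : ℕ} (sr : Fin l → E) (lam : E) (u : E ≃ₗ[ℝ] E) : Prop :=
  u ∈ weylGroup Δ ∧ ∀ g : E ≃ₗ[ℝ] E,
    (∃ i, coPair lam (sr i) = 0 ∧ IsReflectionIn (sr i) g) →
    weylLength Δ sr u < weylLength Δ sr (u * g)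

/-- The length function on `W^P`: the length of the minimal length representative
of the coset `w W_P`. -/
def cosetLength (Δ : Set E) {l : ℕ} (sr : Fin l → E) (lam : E) (w : E ≃ₗ[ℝ] E) : ℕ :=
  sInf {n | ∃ v ∈ parabolic Δ sr lam, n = weylLength Δ sr (w * v)}

/-- `ψ` is the highest root. -/
def IsHighestRoot (Δ : Set E) {l : ℕ} (sr : Fin l → E) (ψ : E) : Prop :=
  IsPositiveRoot Δ sr ψ ∧ ∀ a, IsPositiveRoot Δ sr a →
    ∃ c : Fin l → ℕ, ψ - a = ∑ i, (c i : ℝ) • sr i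


namespace MinusculeProof

lemma inner_self_pos' {a : E} (ha : a ≠ 0) : 0 < ⟪a, a⟫_ℝ := by
  rw [real_inner_self_eq_norm_sq]
  have : ‖a‖ ≠ 0 := norm_ne_zero_iff.mpr ha
  positivity

lemma coPair_add_left (x y a : E) : coPair (x + y) a = coPair x a + coPair y a := by
  unfold coPair; rw [inner_add_left]; ring

lemma coPair_sub_left (x y a : E) : coPair (x - y) a = coPair x a - coPair y a := by
  unfold coPair; rw [inner_sub_left]; ring

lemma coPair_smul_left (c : ℝ) (x a : E) : coPair (c • x) a = c * coPair x a := by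
  unfold coPair; rw [real_inner_smul_left]; ring

lemma coPair_neg_right (x a : E) : coPair x (-a) = -coPair x a := by
  unfold coPair; rw [inner_neg_right, inner_neg_neg]; ring

lemma coPair_self {a : E} (ha : a ≠ 0) : coPair a a = 2 := by
  unfold coPair
  rw [mul_div_assoc, div_self (inner_self_pos' ha).ne', mul_one]

/-- The reflection in `a` as a linear map. -/
def rmap (a : E) : E →ₗ[ℝ] E where
  toFun x := x - coPair x a • a
  map_add' x y := by rw [coPair_add_left]; module
  map_smul' c x := by simp only [RingHom.id_apply]; rw [coPair_smul_left]; module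

lemma rmap_apply (a x : E) : rmap a x = x - coPair x a • a := rfl

lemma rmap_invol (a : E) : Function.Involutive (rmap a) := by
  intro x
  by_cases ha : a = 0
  · simp [rmap_apply, ha]
  · rw [rmap_apply, rmap_apply, coPair_sub_left, coPair_smul_left, coPair_self ha]
    module

/-- The reflection in `a` as a linear equivalence. -/
def sref (a : E) : E ≃ₗ[ℝ] E := LinearEquiv.ofInvolutive (rmap a) (rmap_invol a)

lemma sref_apply (a x : E) : sref a x = x - coPair x a • a := rfl

lemma isReflectionIn_sref (a : E) : IsReflectionIn a (sref a) := fun _ => rfl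

lemma eq_sref_of_isReflectionIn {a : E} {g : E ≃ₗ[ℝ] E} (h : IsReflectionIn a g) : g = sref a := by
  apply LinearEquiv.toLinearMap_injective
  apply LinearMap.ext
  intro x; exact h x

lemma sref_mul_self (a : E) : sref a * sref a = 1 := by
  apply LinearEquiv.toLinearMap_injective
  apply LinearMap.ext
  intro x; exact rmap_invol a x

lemma sref_inv (a : E) : (sref a)⁻¹ = sref a := by
  rw [inv_eq_of_mul_eq_one_right (sref_mul_self a)]

lemma sref_neg (a : E) : sref (-a) = sref a := by
  apply LinearEquiv.toLinearMap_injective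
  apply LinearMap.ext
  intro x
  show x - coPair x (-a) • (-a) = x - coPair x a • a
  rw [coPair_neg_right]; module

lemma sref_apply_self {a : E} (ha : a ≠ 0) : sref a a = -a := by
  rw [sref_apply, coPair_self ha]; module

/-- Orthogonality of a linear equivalence. -/
def Orth (g : E ≃ₗ[ℝ] E) : Prop := ∀ x y : E, ⟪g x, g y⟫_ℝ = ⟪x, y⟫_ℝ

lemma orth_sref (a : E) : Orth (sref a) := by
  intro x y
  by_cases ha : a = 0
  · simp [sref_apply, ha]
  · have hA := (inner_self_pos' ha).ne'
    simp only [sref_apply, coPair]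
    rw [inner_sub_left, inner_sub_right, inner_sub_right, real_inner_smul_left,
      real_inner_smul_left, real_inner_smul_right, real_inner_smul_right,
      real_inner_comm a x, real_inner_comm a y]
    field_simp
    ring

lemma Orth.mul {g h : E ≃ₗ[ℝ] E} (hg : Orth g) (hh : Orth h) : Orth (g * h) :=
  fun x y => (hg (h x) (h y)).trans (hh x y)

lemma orth_one : Orth (1 : E ≃ₗ[ℝ] E) := fun _ _ => rfl

lemma Orth.inv {g : E ≃ₗ[ℝ] E} (hg : Orth g) : Orth g⁻¹ := by
  intro x y
  have := hg (g⁻¹ x) (g⁻¹ y)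
  rw [show g (g⁻¹ x) = x from g.apply_symm_apply x,
    show g (g⁻¹ y) = y from g.apply_symm_apply y] at this
  exact this.symm

lemma coPair_map {g : E ≃ₗ[ℝ] E} (hg : Orth g) (x a : E) :
    coPair (g x) (g a) = coPair x a := by
  unfold coPair; rw [hg, hg]

lemma conj_sref {g : E ≃ₗ[ℝ] E} (hg : Orth g) (a : E) :
    g * sref a * g⁻¹ = sref (g a) := by
  apply eq_sref_of_isReflectionIn
  intro x
  show g (sref a (g⁻¹ x)) = _
  rw [sref_apply, map_sub, map_smul]
  rw [show g (g⁻¹ x) = x from g.apply_symm_apply x]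
  congr 2
  rw [← coPair_map hg (g⁻¹ x) a, show g (g⁻¹ x) = x from g.apply_symm_apply x]



variable {Δ : Set E} {l : ℕ} {sr : Fin l → E}

/-- Positive vector w.r.t. the base. -/
def Pos (sr : Fin l → E) (a : E) : Prop := ∃ c : Fin l → ℕ, a = ∑ i, (c i : ℝ) • sr i

/-- Negative vector w.r.t. the base. -/
def Neg' (sr : Fin l → E) (a : E) : Prop := ∃ c : Fin l → ℕ, a = -∑ i, (c i : ℝ) • sr i

lemma coords_unique (hsr : IsBase Δ sr) {c d : Fin l → ℝ}
    (h : ∑ i, c i • sr i = ∑ i, d i • sr i) : c = d := by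
  funext i
  have h0 : ∑ i, (c i - d i) • sr i = 0 := by
    simp only [sub_smul, Finset.sum_sub_distrib, h, sub_self]
  have := Fintype.linearIndependent_iff.mp hsr.indep _ h0 i
  linarith

lemma pos_or_neg (hsr : IsBase Δ sr) {a : E} (ha : a ∈ Δ) : Pos sr a ∨ Neg' sr a :=
  hsr.decomp a ha

lemma not_pos_and_neg (hΔ : IsRootSystem Δ) (hsr : IsBase Δ sr) {a : E} (ha : a ∈ Δ)
    (hp : Pos sr a) (hng : Neg' sr a) : False := by
  obtain ⟨c, hc⟩ := hp
  obtain ⟨d, hd⟩ := hng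
  have h : ∑ i, ((c i : ℝ) + (d i : ℝ)) • sr i = ∑ i, (0 : ℝ) • sr i := by
    simp only [add_smul, Finset.sum_add_distrib, zero_smul, Finset.sum_const_zero]
    have h2 : ∑ i, (d i : ℝ) • sr i = -a := by rw [hd, neg_neg]
    rw [← hc, h2]; abel
  have hcd := coords_unique hsr h
  have hc0 : ∀ i, (c i : ℝ) = 0 := by
    intro i
    have := congrFun hcd i
    have h1 : (0:ℝ) ≤ c i := Nat.cast_nonneg _
    have h2 : (0:ℝ) ≤ d i := Nat.cast_nonneg _
    linarith
  have : a = 0 := by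
    rw [hc]
    apply Finset.sum_eq_zero
    intro i _
    rw [hc0 i, zero_smul]
  exact hΔ.not_zero (this ▸ ha)

lemma pos_sr (i : Fin l) : Pos sr (sr i) := by
  refine ⟨fun j => if j = i then 1 else 0, ?_⟩
  rw [Finset.sum_eq_single i]
  · simp
  · intro j _ hj; simp [hj]
  · intro h; exact absurd (Finset.mem_univ i) h

lemma root_ne_zero (hΔ : IsRootSystem Δ) {a : E} (ha : a ∈ Δ) : a ≠ 0 := by
  intro h; exact hΔ.not_zero (h ▸ ha)

lemma neg_mem (hΔ : IsRootSystem Δ) {a : E} (ha : a ∈ Δ) : -a ∈ Δ := by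
  have := hΔ.reflect_mem a ha a ha
  rwa [coPair_self (root_ne_zero hΔ ha), show a - (2:ℝ) • a = -a by module] at this

lemma sref_maps (hΔ : IsRootSystem Δ) {a : E} (ha : a ∈ Δ) {b : E} (hb : b ∈ Δ) :
    sref a b ∈ Δ := hΔ.reflect_mem a ha b hb

lemma neg_of_pos {a : E} (hp : Pos sr a) : Neg' sr (-a) := by
  obtain ⟨c, hc⟩ := hp; exact ⟨c, by rw [hc]⟩

lemma pos_of_neg {a : E} (hng : Neg' sr a) : Pos sr (-a) := by
  obtain ⟨c, hc⟩ := hng; exact ⟨c, by rw [hc, neg_neg]⟩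

lemma sum_smul_ite (sr : Fin l → E) (r : ℝ) (i : Fin l) (c : Fin l → ℝ) :
    ∑ j', (if j' = i then c i - r else c j') • sr j'
      = (∑ j', c j' • sr j') - r • sr i := by
  have h1 : ∀ j' ∈ Finset.univ, (if j' = i then c i - r else c j') • sr j'
      = c j' • sr j' - (if j' = i then r else 0) • sr j' := by
    intro j' _
    split_ifs with h
    · subst h; rw [sub_smul]
    · rw [zero_smul, sub_zero]
  rw [Finset.sum_congr rfl h1, Finset.sum_sub_distrib]
  congr 1
  rw [Finset.sum_eq_single i]
  · simp
  · intro j _ hj; simp [hj]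
  · intro h; exact absurd (Finset.mem_univ i) h

/-- A positive root which is not `sr i` stays positive under the simple reflection `s_i`. -/
lemma sref_pos_of_ne (hΔ : IsRootSystem Δ) (hsr : IsBase Δ sr) {a : E} (haΔ : a ∈ Δ)
    (hp : Pos sr a) (i : Fin l) (hne : a ≠ sr i) : Pos sr (sref (sr i) a) := by
  obtain ⟨c, hc⟩ := hp
  have hj : ∃ j, j ≠ i ∧ c j ≠ 0 := by
    by_contra hcon
    push_neg at hcon
    have ha' : a = (c i : ℝ) • sr i := by
      rw [hc, Finset.sum_eq_single i]
      · intro j _ hji; rw [hcon j hji, Nat.cast_zero, zero_smul]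
      · intro h; exact absurd (Finset.mem_univ i) h
    rcases hΔ.reduced (sr i) (hsr.mem i) (c i : ℝ) (by rw [← ha']; exact haΔ) with h1 | h1
    · exact hne (by rw [ha', h1, one_smul])
    · have : (0:ℝ) ≤ (c i : ℝ) := Nat.cast_nonneg _
      rw [h1] at this; linarith
  obtain ⟨j, hji, hcj⟩ := hj
  set k := coPair a (sr i) with hk
  have hb : sref (sr i) a = ∑ j', (if j' = i then (c i : ℝ) - k else (c j' : ℝ)) • sr j' := by
    rw [sref_apply, sum_smul_ite sr k i (fun j' => (c j' : ℝ)), ← hc, ← hk]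
  have hmem : sref (sr i) a ∈ Δ := sref_maps hΔ (hsr.mem i) haΔ
  rcases pos_or_neg hsr hmem with h | h
  · exact h
  · exfalso
    obtain ⟨d, hd⟩ := h
    have : ∑ j', (if j' = i then (c i : ℝ) - k else (c j' : ℝ)) • sr j'
        = ∑ j', (-(d j' : ℝ)) • sr j' := by
      rw [← hb, hd]
      simp only [neg_smul, Finset.sum_neg_distrib]
    have hco := congrFun (coords_unique hsr this) j
    simp only [if_neg hji] at hco
    have h1 : (0:ℝ) ≤ (c j : ℝ) := Nat.cast_nonneg _
    have h2 : (0:ℝ) ≤ (d j : ℝ) := Nat.cast_nonneg _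
    have h3 : (c j : ℝ) ≠ 0 := Nat.cast_ne_zero.mpr hcj
    have : (c j : ℝ) = 0 := by linarith
    exact h3 this

/-- Product of simple reflections given by a list of indices. -/
def wp (sr : Fin l → E) (m : List (Fin l)) : E ≃ₗ[ℝ] E :=
  (m.map fun i => sref (sr i)).prod

lemma wp_nil : wp sr ([] : List (Fin l)) = 1 := rfl

lemma wp_cons (i : Fin l) (m : List (Fin l)) :
    wp sr (i :: m) = sref (sr i) * wp sr m := by
  simp [wp]

lemma wp_append (m m' : List (Fin l)) :
    wp sr (m ++ m') = wp sr m * wp sr m' := by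
  simp [wp]

lemma wp_orth (m : List (Fin l)) : Orth (wp sr m) := by
  induction m with
  | nil => exact orth_one
  | cons i rest ih => rw [wp_cons]; exact (orth_sref (sr i)).mul ih

lemma wp_maps (hΔ : IsRootSystem Δ) (hsr : IsBase Δ sr) (m : List (Fin l))
    {a : E} (ha : a ∈ Δ) : wp sr m a ∈ Δ := by
  induction m with
  | nil => exact ha
  | cons i rest ih =>
    rw [wp_cons]
    exact sref_maps hΔ (hsr.mem i) ih

lemma wp_inv (m : List (Fin l)) : (wp sr m)⁻¹ = wp sr m.reverse := by
  induction m with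
  | nil => simp [wp_nil]
  | cons i rest ih =>
    simp only [wp_cons, List.reverse_cons, wp_append, mul_inv_rev, ih, wp_nil, mul_one, sref_inv]

lemma wp_inv_maps (hΔ : IsRootSystem Δ) (hsr : IsBase Δ sr) (m : List (Fin l))
    {a : E} (ha : a ∈ Δ) : (wp sr m)⁻¹ a ∈ Δ := by
  rw [wp_inv]; exact wp_maps hΔ hsr _ ha

/-- `w` is a product of simple reflections. -/
def InWs (sr : Fin l → E) (w : E ≃ₗ[ℝ] E) : Prop := ∃ m : List (Fin l), wp sr m = w

lemma InWs.mul {w w' : E ≃ₗ[ℝ] E} (h : InWs sr w) (h' : InWs sr w') : InWs sr (w * w') := by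
  obtain ⟨m, rfl⟩ := h; obtain ⟨m', rfl⟩ := h'
  exact ⟨m ++ m', wp_append m m'⟩

lemma InWs.inv {w : E ≃ₗ[ℝ] E} (h : InWs sr w) : InWs sr w⁻¹ := by
  obtain ⟨m, rfl⟩ := h
  exact ⟨m.reverse, (wp_inv m).symm⟩

lemma inWs_one : InWs sr (1 : E ≃ₗ[ℝ] E) := ⟨[], rfl⟩

lemma inWs_sref (i : Fin l) : InWs sr (sref (sr i)) := ⟨[i], by rw [wp_cons, wp_nil, mul_one]⟩

lemma InWs.orth {w : E ≃ₗ[ℝ] E} (h : InWs sr w) : Orth w := by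
  obtain ⟨m, rfl⟩ := h; exact wp_orth m

lemma InWs.maps (hΔ : IsRootSystem Δ) (hsr : IsBase Δ sr) {w : E ≃ₗ[ℝ] E} (h : InWs sr w)
    {a : E} (ha : a ∈ Δ) : w a ∈ Δ := by
  obtain ⟨m, rfl⟩ := h; exact wp_maps hΔ hsr m ha

lemma toIndexList (L : List (E ≃ₗ[ℝ] E)) (hsimp : ∀ g ∈ L, IsSimpleReflection Δ sr g) :
    ∃ m : List (Fin l), m.length = L.length ∧ wp sr m = L.prod := by
  induction L with
  | nil => exact ⟨[], rfl, rfl⟩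
  | cons g L' ih =>
    obtain ⟨m', hm1, hm2⟩ := ih (fun g' hg' => hsimp g' (List.mem_cons_of_mem _ hg'))
    obtain ⟨i, hi⟩ := hsimp g List.mem_cons_self
    refine ⟨i :: m', by simp [hm1], ?_⟩
    rw [wp_cons, hm2, List.prod_cons, eq_sref_of_isReflectionIn hi]

/-- The length set of `weylLength` can be described via index lists. -/
lemma weylLength_eq (Δ : Set E) (sr : Fin l → E) (w : E ≃ₗ[ℝ] E) :
    weylLength Δ sr w = sInf {n | ∃ m : List (Fin l), m.length = n ∧ wp sr m = w} := by
  unfold weylLength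
  congr 1
  ext n
  constructor
  · rintro ⟨L, hlen, hsimp, hprod⟩
    obtain ⟨m, hm1, hm2⟩ := toIndexList L hsimp
    exact ⟨m, hm1.trans hlen, hm2.trans hprod⟩
  · rintro ⟨m, hlen, hprod⟩
    refine ⟨m.map fun i => sref (sr i), by simp [hlen], ?_, hprod⟩
    intro g hg
    simp only [List.mem_map] at hg
    obtain ⟨i, _, rfl⟩ := hg
    exact ⟨i, isReflectionIn_sref (sr i)⟩

lemma weylLength_le (Δ : Set E) (hsr : IsBase Δ sr) (m : List (Fin l)) :
    weylLength Δ sr (wp sr m) ≤ m.length := by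
  rw [weylLength_eq]
  exact Nat.sInf_le ⟨m, rfl, rfl⟩

lemma exists_min_word (Δ : Set E) {w : E ≃ₗ[ℝ] E} (hw : InWs sr w) :
    ∃ m : List (Fin l), m.length = weylLength Δ sr w ∧ wp sr m = w := by
  obtain ⟨m0, hm0⟩ := hw
  have hne : {n | ∃ m : List (Fin l), m.length = n ∧ wp sr m = w}.Nonempty :=
    ⟨m0.length, m0, rfl, hm0⟩
  have := Nat.sInf_mem hne
  obtain ⟨m, hm1, hm2⟩ := this
  exact ⟨m, by rw [weylLength_eq]; exact hm1, hm2⟩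

/-- The exchange lemma. -/
lemma exchange (hΔ : IsRootSystem Δ) (hsr : IsBase Δ sr) :
    ∀ (m : List (Fin l)) (j : Fin l), Neg' sr (wp sr m (sr j)) →
    ∃ m' : List (Fin l), m'.length + 1 = m.length ∧ wp sr m' = wp sr m * sref (sr j) := by
  intro m
  induction m with
  | nil =>
    intro j hneg
    rw [wp_nil] at hneg
    exact absurd hneg (fun h => not_pos_and_neg hΔ hsr (hsr.mem j) (pos_sr j) h)
  | cons i rest ih =>
    intro j hneg
    have hβΔ : wp sr rest (sr j) ∈ Δ := wp_maps hΔ hsr rest (hsr.mem j)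
    rcases pos_or_neg hsr hβΔ with hp | hng
    · -- positive: then wp rest (sr j) = sr i
      have hΔ2 : wp sr (i :: rest) (sr j) ∈ Δ := wp_maps hΔ hsr _ (hsr.mem j)
      have happ : wp sr (i :: rest) (sr j) = sref (sr i) (wp sr rest (sr j)) := by
        rw [wp_cons]; rfl
      have heq : wp sr rest (sr j) = sr i := by
        by_contra hne
        have hpos := sref_pos_of_ne hΔ hsr hβΔ hp i hne
        rw [← happ] at hpos
        exact not_pos_and_neg hΔ hsr hΔ2 hpos hneg
      have hconj := conj_sref (wp_orth (sr := sr) rest) (sr j)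
      rw [heq] at hconj
      have h2 : wp sr rest * sref (sr j) = sref (sr i) * wp sr rest := by
        rw [← hconj]; group
      refine ⟨rest, by simp, ?_⟩
      rw [wp_cons, mul_assoc, h2, ← mul_assoc, sref_mul_self, one_mul]
    · obtain ⟨m'', hm1, hm2⟩ := ih j hng
      refine ⟨i :: m'', by simp [hm1], ?_⟩
      rw [wp_cons, hm2, wp_cons, mul_assoc]

/-- K1: if `w(sr j)` is negative then right multiplication by `s_j` decreases length. -/
lemma length_lt_of_neg (hΔ : IsRootSystem Δ) (hsr : IsBase Δ sr) {w : E ≃ₗ[ℝ] E}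
    (hw : InWs sr w) (j : Fin l) (hneg : Neg' sr (w (sr j))) :
    weylLength Δ sr (w * sref (sr j)) < weylLength Δ sr w := by
  obtain ⟨m, hmlen, hmprod⟩ := exists_min_word Δ hw
  have hk : 1 ≤ m.length := by
    rcases Nat.eq_zero_or_pos m.length with h0 | h1
    · exfalso
      have : m = [] := List.length_eq_zero_iff.mp h0
      subst this
      rw [← hmprod, wp_nil] at hneg
      exact not_pos_and_neg hΔ hsr (hsr.mem j) (pos_sr j) hneg
    · exact h1
  obtain ⟨m', hm1, hm2⟩ := exchange hΔ hsr m j (by rw [hmprod]; exact hneg)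
  calc weylLength Δ sr (w * sref (sr j)) ≤ m'.length := by
        rw [← hmprod, ← hm2]; exact weylLength_le Δ hsr m'
    _ < m.length := by omega
    _ = weylLength Δ sr w := hmlen

/-- K2: if `w(sr j)` is positive then right multiplication by `s_j` increases length. -/
lemma length_lt_of_pos (hΔ : IsRootSystem Δ) (hsr : IsBase Δ sr) {w : E ≃ₗ[ℝ] E}
    (hw : InWs sr w) (j : Fin l) (hpos : Pos sr (w (sr j))) :
    weylLength Δ sr w < weylLength Δ sr (w * sref (sr j)) := by
  have hw' : InWs sr (w * sref (sr j)) := hw.mul (inWs_sref j)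
  have happly : (w * sref (sr j)) (sr j) = -(w (sr j)) := by
    show w (sref (sr j) (sr j)) = _
    rw [sref_apply_self (root_ne_zero hΔ (hsr.mem j)), map_neg]
  have hneg : Neg' sr ((w * sref (sr j)) (sr j)) := by
    rw [happly]; exact neg_of_pos hpos
  have := length_lt_of_neg hΔ hsr hw' j hneg
  rwa [mul_assoc, sref_mul_self, mul_one] at this

/-- A linear functional taking value 1 on each simple root ("height"). -/
lemma exists_htf (hΔ : IsRootSystem Δ) (hsr : IsBase Δ sr) :
    ∃ f : E →ₗ[ℝ] ℝ, ∀ i, f (sr i) = 1 := by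
  have hspan : ⊤ ≤ Submodule.span ℝ (Set.range sr) := by
    rw [← hΔ.span_top]
    apply Submodule.span_le.mpr
    intro a ha
    rcases hsr.decomp a ha with ⟨c, rfl⟩ | ⟨c, rfl⟩
    · exact Submodule.sum_mem _ fun i _ =>
        Submodule.smul_mem _ _ (Submodule.subset_span ⟨i, rfl⟩)
    · exact Submodule.neg_mem _ (Submodule.sum_mem _ fun i _ =>
        Submodule.smul_mem _ _ (Submodule.subset_span ⟨i, rfl⟩))
  set b := Module.Basis.mk hsr.indep hspan with hb
  refine ⟨∑ i, b.coord i, ?_⟩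
  intro j
  have hbj : b j = sr j := by rw [hb, Module.Basis.mk_apply]
  rw [← hbj, LinearMap.sum_apply]
  have : ∀ i, b.coord i (b j) = if i = j then 1 else 0 := by
    intro i
    rw [Module.Basis.coord_apply, Module.Basis.repr_self, Finsupp.single_apply]
    simp [eq_comm]
  rw [Finset.sum_congr rfl (fun i _ => this i)]
  simp

lemma htf_sum (f : E →ₗ[ℝ] ℝ) (hf : ∀ i, f (sr i) = 1) (c : Fin l → ℝ) :
    f (∑ i, c i • sr i) = ∑ i, c i := by
  rw [map_sum]
  apply Finset.sum_congr rfl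
  intro i _
  rw [map_smul, hf i, smul_eq_mul, mul_one]

/-- Every reflection in a root is a product of simple reflections. -/
lemma sref_inWs (hΔ : IsRootSystem Δ) (hsr : IsBase Δ sr) {a : E} (ha : a ∈ Δ) :
    InWs sr (sref a) := by
  obtain ⟨f, hf⟩ := exists_htf hΔ hsr
  -- reduce to positive roots
  suffices h : ∀ N : ℕ, ∀ a : E, a ∈ Δ → ∀ c : Fin l → ℕ, a = ∑ i, (c i : ℝ) • sr i →
      ∑ i, c i = N → InWs sr (sref a) by
    rcases pos_or_neg hsr ha with ⟨c, hc⟩ | hng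
    · exact h _ a ha c hc rfl
    · obtain ⟨c, hc⟩ := pos_of_neg hng
      rw [← sref_neg]
      exact h _ (-a) (neg_mem hΔ ha) c hc rfl
  intro N
  induction N using Nat.strong_induction_on with
  | _ N ih =>
    intro a ha c hc hN
    -- find i with positive inner product with a and c i ≠ 0
    have hinner : ∃ i, (c i : ℝ) * ⟪sr i, a⟫_ℝ > 0 := by
      by_contra hcon
      push_neg at hcon
      have h1 : ⟪a, a⟫_ℝ ≤ 0 := by
        nth_rewrite 1 [hc]
        rw [sum_inner]
        apply Finset.sum_nonpos
        intro i _
        rw [real_inner_smul_left]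
        exact hcon i
      exact absurd h1 (not_le.mpr (inner_self_pos' (root_ne_zero hΔ ha)))
    obtain ⟨i, hi⟩ := hinner
    have hipos : 0 < ⟪sr i, a⟫_ℝ := by
      rcases lt_trichotomy (⟪sr i, a⟫_ℝ) 0 with h | h | h
      · nlinarith [Nat.cast_nonneg (α := ℝ) (c i)]
      · rw [h] at hi; linarith
      · exact h
    by_cases hai : a = sr i
    · subst hai; exact inWs_sref i
    · -- b := sref (sr i) a has smaller height
      set k := coPair a (sr i) with hk
      have hkpos : 0 < k := by
        rw [hk]
        unfold coPair
        apply div_pos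
        · rw [real_inner_comm]; linarith
        · exact inner_self_pos' (root_ne_zero hΔ (hsr.mem i))
      have hbΔ : sref (sr i) a ∈ Δ := sref_maps hΔ (hsr.mem i) ha
      have hbpos : Pos sr (sref (sr i) a) := sref_pos_of_ne hΔ hsr ha ⟨c, hc⟩ i hai
      obtain ⟨d, hd⟩ := hbpos
      -- height comparison
      have hfb : f (sref (sr i) a) = (∑ j, (c j : ℝ)) - k := by
        rw [sref_apply, ← hk, map_sub, map_smul, hf i, smul_eq_mul, mul_one, hc, htf_sum f hf]
      have hfb' : f (sref (sr i) a) = ∑ j, (d j : ℝ) := by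
        rw [hd, htf_sum f hf]
      have hlt : ∑ j, d j < N := by
        have : (∑ j, (d j : ℝ)) < ∑ j, (c j : ℝ) := by
          rw [← hfb', hfb]; linarith
        have h2 : ((∑ j, d j : ℕ) : ℝ) < ((∑ j, c j : ℕ) : ℝ) := by
          push_cast; exact this
        have := Nat.cast_lt.mp h2
        omega
      have hIH : InWs sr (sref (sref (sr i) a)) := ih _ hlt _ hbΔ d hd rfl
      -- sref a = sref (sr i) * sref b * sref (sr i)
      have hconj := conj_sref (orth_sref (sr i)) (sref (sr i) a)
      have hback : sref (sr i) (sref (sr i) a) = a := rmap_invol (sr i) a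
      rw [hback, sref_inv] at hconj
      rw [← hconj]
      exact ((inWs_sref i).mul hIH).mul (inWs_sref i)

/-- Every element of the Weyl group is a product of simple reflections. -/
lemma weylGroup_inWs (hΔ : IsRootSystem Δ) (hsr : IsBase Δ sr) {w : E ≃ₗ[ℝ] E}
    (hw : w ∈ weylGroup Δ) : InWs sr w := by
  induction hw using Subgroup.closure_induction with
  | mem g hg =>
    obtain ⟨a, ha, hrefl⟩ := hg
    rw [eq_sref_of_isReflectionIn hrefl]
    exact sref_inWs hΔ hsr ha
  | one => exact inWs_one
  | mul x y _ _ hx hy => exact hx.mul hy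
  | inv x _ hx => exact hx.inv

/-- Dominance: `coPair lam a ≥ 0` for positive roots `a`. -/
lemma coPair_nonneg_of_pos (hΔ : IsRootSystem Δ) (hsr : IsBase Δ sr)
    (hdom : ∀ i, 0 ≤ coPair lam (sr i)) {a : E} (ha : a ∈ Δ) (hp : Pos sr a) :
    0 ≤ coPair lam a := by
  obtain ⟨c, hc⟩ := hp
  unfold coPair
  apply div_nonneg
  · have : 0 ≤ ⟪lam, a⟫_ℝ := by
      rw [hc, inner_sum]
      apply Finset.sum_nonneg
      intro i _
      rw [real_inner_smul_right]
      apply mul_nonneg (Nat.cast_nonneg _)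
      have hd := hdom i
      unfold coPair at hd
      have hpos := inner_self_pos' (root_ne_zero hΔ (hsr.mem i))
      by_contra hneg
      push_neg at hneg
      have : 2 * ⟪lam, sr i⟫_ℝ / ⟪sr i, sr i⟫_ℝ < 0 := div_neg_of_neg_of_pos (by linarith) hpos
      linarith
    linarith
  · exact le_of_lt (inner_self_pos' (root_ne_zero hΔ ha))

/-- Key values of the pairing of `lam` with roots, for minuscule `lam`. -/
lemma coPair_root_bounds (hΔ : IsRootSystem Δ) (hsr : IsBase Δ sr)
    (hlam : IsMinuscule Δ sr lam) {a : E} (ha : a ∈ Δ) :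
    ∃ z : ℤ, coPair lam a = z ∧ -1 ≤ z ∧ z ≤ 1 := by
  obtain ⟨⟨hint, hdom⟩, hmin⟩ := hlam
  obtain ⟨z, hz⟩ := hint a ha
  refine ⟨z, hz, ?_, ?_⟩
  · -- -1 ≤ z
    rcases pos_or_neg hsr ha with hp | hng
    · have := coPair_nonneg_of_pos hΔ hsr hdom ha hp
      rw [hz] at this
      have h0 : (0:ℤ) ≤ z := by exact_mod_cast this
      omega
    · have hna : -a ∈ Δ := neg_mem hΔ ha
      have hnp : Pos sr (-a) := pos_of_neg hng
      have h1 := hmin (-a) ⟨hna, hnp⟩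
      have h2 : coPair lam (-a) = -coPair lam a := coPair_neg_right lam a
      rw [h2, hz] at h1
      have : (-1 : ℝ) ≤ (z : ℝ) := by linarith
      exact_mod_cast this
  · rcases pos_or_neg hsr ha with hp | hng
    · have := hmin a ⟨ha, hp⟩
      rw [hz] at this
      exact_mod_cast this
    · have hna : -a ∈ Δ := neg_mem hΔ ha
      have hnp : Pos sr (-a) := pos_of_neg hng
      have h0 := coPair_nonneg_of_pos hΔ hsr hdom hna hnp
      rw [coPair_neg_right, hz] at h0
      have : (z : ℝ) ≤ 1 := by linarith
      exact_mod_cast this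

/-- Pairing of an orbit element with a simple root. -/
lemma coPair_orbit (hΔ : IsRootSystem Δ) (hsr : IsBase Δ sr)
    (hlam : IsMinuscule Δ sr lam) {w : E ≃ₗ[ℝ] E} (hw : InWs sr w) (i : Fin l) :
    ∃ z : ℤ, coPair (w lam) (sr i) = z ∧ -1 ≤ z ∧ z ≤ 1 := by
  have h1 : coPair (w lam) (sr i) = coPair lam (w⁻¹ (sr i)) := by
    have := coPair_map hw.orth lam (w⁻¹ (sr i))
    rw [show w (w⁻¹ (sr i)) = sr i from w.apply_symm_apply (sr i)] at this
    exact this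
  rw [h1]
  exact coPair_root_bounds hΔ hsr hlam (hw.inv.maps hΔ hsr (hsr.mem i))

lemma length_cons_le (Δ : Set E) (hsr : IsBase Δ sr) {w : E ≃ₗ[ℝ] E} (hw : InWs sr w)
    (i : Fin l) : weylLength Δ sr (sref (sr i) * w) ≤ weylLength Δ sr w + 1 := by
  obtain ⟨m, hm1, hm2⟩ := exists_min_word Δ hw
  have : wp sr (i :: m) = sref (sr i) * w := by rw [wp_cons, hm2]
  calc weylLength Δ sr (sref (sr i) * w) ≤ (i :: m).length := by
        rw [← this]; exact weylLength_le Δ hsr (i :: m)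
    _ = weylLength Δ sr w + 1 := by simp [hm1]

/-- Each simple reflection changes the height of `lam - w lam` by at most one. -/
lemma lower_step (hΔ : IsRootSystem Δ) (hsr : IsBase Δ sr) (hlam : IsMinuscule Δ sr lam)
    (f : E →ₗ[ℝ] ℝ) (hf : ∀ i, f (sr i) = 1) :
    ∀ m : List (Fin l), f (lam - wp sr m lam) ≤ (m.length : ℝ) := by
  intro m
  induction m with
  | nil =>
    show f (lam - (1 : E ≃ₗ[ℝ] E) lam) ≤ _
    simp
  | cons i rest ih =>
    have happ : wp sr (i :: rest) lam
        = wp sr rest lam - coPair (wp sr rest lam) (sr i) • sr i := by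
      rw [wp_cons]; rfl
    obtain ⟨z, hz, hz1, hz2⟩ := coPair_orbit hΔ hsr hlam ⟨rest, rfl⟩ i
    have hsplit : lam - wp sr (i :: rest) lam
        = (lam - wp sr rest lam) + coPair (wp sr rest lam) (sr i) • sr i := by
      rw [happ]; abel
    rw [hsplit, map_add, map_smul, hf i, smul_eq_mul, mul_one]
    have hle : coPair (wp sr rest lam) (sr i) ≤ 1 := by
      rw [hz]; exact_mod_cast hz2
    have hlen : ((i :: rest).length : ℝ) = (rest.length : ℝ) + 1 := by
      rw [List.length_cons]; push_cast; ring
    rw [hlen]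
    linarith

/-- Upper bound: the length of a minimal representative is at most the height. -/
lemma upper (hΔ : IsRootSystem Δ) (hsr : IsBase Δ sr) (hlam : IsMinuscule Δ sr lam) :
    ∀ N : ℕ, ∀ u : E ≃ₗ[ℝ] E, ∀ n : Fin l → ℕ,
    IsMinRep Δ sr lam u → u lam = lam - ∑ j, (n j : ℝ) • sr j → ∑ j, n j = N →
    weylLength Δ sr u ≤ N := by
  intro N
  induction N using Nat.strong_induction_on with
  | _ N ih =>
  intro u n hu hn hN
  obtain ⟨huW, humin⟩ := hu
  have huWs : InWs sr u := weylGroup_inWs hΔ hsr huW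
  have hupos : ∀ i, coPair lam (sr i) = 0 → Pos sr (u (sr i)) := by
    intro i h0
    rcases pos_or_neg hsr (huWs.maps hΔ hsr (hsr.mem i)) with hp | hng
    · exact hp
    · exfalso
      have h1 := length_lt_of_neg hΔ hsr huWs i hng
      have h2 := humin (sref (sr i)) ⟨i, h0, isReflectionIn_sref (sr i)⟩
      omega
  by_cases hN0 : N = 0
  · subst hN0
    have hnz : ∀ j, n j = 0 := fun j =>
      Finset.sum_eq_zero_iff.mp hN j (Finset.mem_univ j)
    have hfix : u lam = lam := by
      rw [hn]
      have hz : ∑ j, ((n j : ℝ)) • sr j = 0 :=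
        Finset.sum_eq_zero (fun j _ => by rw [hnz j]; simp)
      rw [hz, sub_zero]
    by_contra hcon
    push_neg at hcon
    obtain ⟨m, hm1, hm2⟩ := exists_min_word Δ huWs
    have hmne : m ≠ [] := by
      intro h
      subst h
      simp only [List.length_nil] at hm1
      omega
    obtain ⟨m₁, i, hm⟩ : ∃ m₁ i, m = m₁ ++ [i] := by
      rcases List.eq_nil_or_concat m with h | ⟨L, b, h⟩
      · exact absurd h hmne
      · exact ⟨L, b, by rw [h, List.concat_eq_append]⟩
    subst hm
    have hsplit : u = wp sr m₁ * sref (sr i) := by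
      rw [← hm2, wp_append, wp_cons, wp_nil, mul_one]
    have hus : u * sref (sr i) = wp sr m₁ := by
      rw [hsplit, mul_assoc, sref_mul_self, mul_one]
    have hle : weylLength Δ sr (u * sref (sr i)) ≤ m₁.length := by
      rw [hus]; exact weylLength_le Δ hsr m₁
    have hlen : m₁.length + 1 = (m₁ ++ [i]).length := by simp
    have hneg : Neg' sr (u (sr i)) := by
      rcases pos_or_neg hsr (huWs.maps hΔ hsr (hsr.mem i)) with hp | hng
      · exfalso
        have := length_lt_of_pos hΔ hsr huWs i hp
        omega
      · exact hng
    have h0 : coPair lam (sr i) = 0 := by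
      have e1 : coPair lam (sr i) = coPair lam (u (sr i)) := by
        have h := coPair_map huWs.orth lam (sr i)
        rw [hfix] at h
        exact h.symm
      have hnn := coPair_nonneg_of_pos hΔ hsr hlam.1.2
        (neg_mem hΔ (huWs.maps hΔ hsr (hsr.mem i))) (pos_of_neg hneg)
      rw [coPair_neg_right] at hnn
      have hd := hlam.1.2 i
      linarith [e1 ▸ hnn]
    have := humin (sref (sr i)) ⟨i, h0, isReflectionIn_sref (sr i)⟩
    omega
  · -- N > 0
    have hne : lam ≠ u lam := by
      intro h
      have hsum0 : ∑ j, (n j : ℝ) • sr j = 0 := by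
        rw [hn] at h
        have := sub_eq_self.mp h.symm  -- lam - Σ = lam → Σ = 0
        exact this
      have hc := coords_unique hsr (c := fun j => (n j : ℝ)) (d := fun _ => 0)
        (by rw [hsum0]; simp)
      have : ∀ j, n j = 0 := by
        intro j
        have := congrFun hc j
        exact_mod_cast this
      apply hN0
      rw [← hN]
      exact Finset.sum_eq_zero (fun j _ => this j)
    have hμμ : ⟪u lam, u lam⟫_ℝ = ⟪lam, lam⟫_ℝ := huWs.orth lam lam
    have hlt0 : ⟪lam - u lam, u lam⟫_ℝ < 0 := by
      have e3 : 0 < ⟪lam - u lam, lam - u lam⟫_ℝ :=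
        inner_self_pos' (sub_ne_zero_of_ne hne)
      have e1 : ⟪lam - u lam, lam - u lam⟫_ℝ
          = ⟪lam, lam⟫_ℝ - 2 * ⟪lam, u lam⟫_ℝ + ⟪u lam, u lam⟫_ℝ := by
        rw [inner_sub_left, inner_sub_right, inner_sub_right, real_inner_comm (u lam) lam]
        ring
      have e2 : ⟪lam - u lam, u lam⟫_ℝ = ⟪lam, u lam⟫_ℝ - ⟪u lam, u lam⟫_ℝ := by
        rw [inner_sub_left]
      linarith
    have hsum : lam - u lam = ∑ j, (n j : ℝ) • sr j := by
      rw [hn]; abel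
    obtain ⟨j, hnj, hj⟩ : ∃ j, n j ≠ 0 ∧ ⟪sr j, u lam⟫_ℝ < 0 := by
      by_contra hcon
      push_neg at hcon
      have : 0 ≤ ⟪lam - u lam, u lam⟫_ℝ := by
        rw [hsum, sum_inner]
        apply Finset.sum_nonneg
        intro j' _
        rw [real_inner_smul_left]
        rcases Nat.eq_zero_or_pos (n j') with h | h
        · rw [h]; simp
        · exact mul_nonneg (Nat.cast_nonneg _) (hcon j' (Nat.pos_iff_ne_zero.mp h))
      linarith
    have hcoμ : coPair (u lam) (sr j) = -1 := by
      obtain ⟨z, hz, h1, h2⟩ := coPair_orbit hΔ hsr hlam huWs j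
      have hneg' : coPair (u lam) (sr j) < 0 := by
        unfold coPair
        apply div_neg_of_neg_of_pos
        · rw [real_inner_comm]; linarith
        · exact inner_self_pos' (root_ne_zero hΔ (hsr.mem j))
      have hzlt : z < 0 := by
        rw [hz] at hneg'
        exact_mod_cast hneg'
      have hz' : z = -1 := by omega
      rw [hz, hz']
      norm_num
    have hnj1 : 1 ≤ n j := Nat.one_le_iff_ne_zero.mpr hnj
    set u'' := sref (sr j) * u with hu''def
    have hu''lam : u'' lam = u lam + sr j := by
      show sref (sr j) (u lam) = _
      rw [sref_apply, hcoμ]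
      module
    set n' : Fin l → ℕ := fun i0 => if i0 = j then n j - 1 else n i0 with hn'def
    have hn'sum : u'' lam = lam - ∑ i0, (n' i0 : ℝ) • sr i0 := by
      have hsum' : ∑ i0, (n' i0 : ℝ) • sr i0
          = (∑ i0, (n i0 : ℝ) • sr i0) - (1 : ℝ) • sr j := by
        rw [← sum_smul_ite sr 1 j (fun i0 => (n i0 : ℝ))]
        apply Finset.sum_congr rfl
        intro i0 _
        congr 1
        simp only [hn'def]
        split_ifs with h
        · subst h; rw [Nat.cast_sub hnj1, Nat.cast_one]
        · rfl
      rw [hu''lam, hn, hsum']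
      module
    have hNsum : ∑ i0, n' i0 + 1 = N := by
      rw [← hN]
      rw [← Finset.add_sum_erase _ n (Finset.mem_univ j),
        ← Finset.add_sum_erase _ n' (Finset.mem_univ j)]
      have herase : ∑ i0 ∈ Finset.univ.erase j, n' i0 = ∑ i0 ∈ Finset.univ.erase j, n i0 :=
        Finset.sum_congr rfl (fun i0 hi0 => by
          simp only [hn'def]
          rw [if_neg (Finset.ne_of_mem_erase hi0)])
      rw [herase]
      simp only [hn'def, if_pos rfl]
      omega
    have hu''W : u'' ∈ weylGroup Δ := by
      apply Subgroup.mul_mem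
      · exact Subgroup.subset_closure ⟨sr j, hsr.mem j, isReflectionIn_sref (sr j)⟩
      · exact huW
    have hu''Ws : InWs sr u'' := (inWs_sref j).mul huWs
    have hu''min : IsMinRep Δ sr lam u'' := by
      refine ⟨hu''W, ?_⟩
      rintro g ⟨i, h0, hrefl⟩
      rw [eq_sref_of_isReflectionIn hrefl]
      apply length_lt_of_pos hΔ hsr hu''Ws i
      have hupos_i : Pos sr (u (sr i)) := hupos i h0
      have hne_srj : u (sr i) ≠ sr j := by
        intro heq
        have h := coPair_map huWs.orth lam (sr i)
        rw [heq] at h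
        rw [hcoμ, h0] at h
        norm_num at h
      have happ : u'' (sr i) = sref (sr j) (u (sr i)) := rfl
      rw [happ]
      exact sref_pos_of_ne hΔ hsr (huWs.maps hΔ hsr (hsr.mem i)) hupos_i j hne_srj
    have hIH := ih (N - 1) (by omega) u'' n' hu''min hn'sum (by omega)
    have hrec : sref (sr j) * u'' = u := by
      rw [hu''def, ← mul_assoc, sref_mul_self, one_mul]
    calc weylLength Δ sr u = weylLength Δ sr (sref (sr j) * u'') := by rw [hrec]
      _ ≤ weylLength Δ sr u'' + 1 := length_cons_le Δ hsr hu''Ws j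
      _ ≤ (N - 1) + 1 := by omega
      _ = N := by omega

end MinusculeProof

/-- If `lam` is minuscule, `u ∈ W^P` and `u(lam) = lam - ∑ n_j • sr j` with the `n_j`
nonnegative integers, then `ℓ(u) = ∑ n_j`. -/
theorem minuscule_length_eq_sum_coeffs
    {E : Type*} [NormedAddCommGroup E] [InnerProductSpace ℝ E]
    (Δ : Set E) {l : ℕ} (sr : Fin l → E)
    (hΔ : IsRootSystem Δ) (hsr : IsBase Δ sr)
    (lam : E) (hlam : IsMinuscule Δ sr lam)
    (u : E ≃ₗ[ℝ] E) (hu : IsMinRep Δ sr lam u)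
    (n : Fin l → ℕ) (hn : u lam = lam - ∑ j, (n j : ℝ) • sr j) :
    weylLength Δ sr u = ∑ j, n j := by
  have hup : weylLength Δ sr u ≤ ∑ j, n j :=
    MinusculeProof.upper hΔ hsr hlam (∑ j, n j) u n hu hn rfl
  have huWs : MinusculeProof.InWs sr u := MinusculeProof.weylGroup_inWs hΔ hsr hu.1
  obtain ⟨f, hf⟩ := MinusculeProof.exists_htf hΔ hsr
  obtain ⟨m, hm1, hm2⟩ := MinusculeProof.exists_min_word Δ huWs
  have hstep := MinusculeProof.lower_step hΔ hsr hlam f hf m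
  rw [hm2] at hstep
  have hval : f (lam - u lam) = ∑ j, (n j : ℝ) := by
    rw [hn, sub_sub_cancel]
    exact MinusculeProof.htf_sum f hf (fun j => (n j : ℝ))
  rw [hval] at hstep
  have hlow : ∑ j, n j ≤ weylLength Δ sr u := by
    rw [hm1] at hstep
    exact_mod_cast hstep
  omega
end
end

section
/- If λ is minuscule, u ∈ W^P, and α ∈ Δ⁺ satisfies ℓ(s_α u) = ℓ(u) + 1 (length in W^P), then α is a simple root and (u(λ), α^∨) = 1. -/
open scoped InnerProductSpace
noncomputable section

variable {E : Type*} [NormedAddCommGroup E] [InnerProductSpace ℝ E]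

section Dev
variable {E : Type*} [NormedAddCommGroup E] [InnerProductSpace ℝ E]

lemma coPair_add_left (x y a : E) : coPair (x + y) a = coPair x a + coPair y a := by
  unfold coPair; rw [inner_add_left]; ring

lemma coPair_smul_left (r : ℝ) (x a : E) : coPair (r • x) a = r * coPair x a := by
  unfold coPair; rw [real_inner_smul_left]; ring

lemma coPair_neg_right (x a : E) : coPair x (-a) = - coPair x a := by
  unfold coPair; rw [inner_neg_right, inner_neg_neg]; ring

lemma inner_self_pos' {a : E} (h : a ≠ 0) : 0 < ⟪a, a⟫_ℝ := by
  have := real_inner_self_eq_norm_sq a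
  have h1 : ‖a‖ ≠ 0 := norm_ne_zero_iff.mpr h
  have h2 : 0 < ‖a‖ := lt_of_le_of_ne (norm_nonneg a) (Ne.symm h1)
  nlinarith [real_inner_self_eq_norm_sq a]

lemma coPair_self {a : E} (h : a ≠ 0) : coPair a a = 2 := by
  have h2 : ⟪a,a⟫_ℝ ≠ 0 := ne_of_gt (inner_self_pos' h)
  unfold coPair; field_simp

lemma coPair_sub_smul (x a : E) : coPair (x - coPair x a • a) a = - coPair x a := by
  by_cases h : a = 0
  · simp [coPair, h]
  · have h2 : ⟪a,a⟫_ℝ ≠ 0 := ne_of_gt (inner_self_pos' h)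
    unfold coPair; rw [inner_sub_left, real_inner_smul_left]
    field_simp; ring

/-- The reflection in `a` as a linear equivalence. -/
def reflMap (a : E) : E ≃ₗ[ℝ] E :=
  LinearEquiv.ofInvolutive
    { toFun := fun x => x - coPair x a • a
      map_add' := fun x y => by
        show (x + y) - coPair (x+y) a • a = (x - _ • a) + (y - _ • a)
        rw [coPair_add_left, add_smul]; abel
      map_smul' := fun r x => by
        show (r • x) - coPair (r • x) a • a = r • (x - _ • a)
        rw [coPair_smul_left, mul_smul, smul_sub] }
    (fun x => by
      show (x - coPair x a • a) - coPair (x - coPair x a • a) a • a = x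
      rw [coPair_sub_smul, neg_smul, sub_neg_eq_add, sub_add_cancel])

@[simp] lemma reflMap_apply (a x : E) : reflMap a x = x - coPair x a • a := rfl

lemma reflMap_isReflectionIn (a : E) : IsReflectionIn a (reflMap a) := fun _ => rfl

lemma IsReflectionIn.eq_reflMap {a : E} {s : E ≃ₗ[ℝ] E} (h : IsReflectionIn a s) :
    s = reflMap a := by
  apply LinearEquiv.toLinearMap_injective
  apply LinearMap.ext
  intro x; exact h x

lemma reflMap_neg (a : E) : reflMap (-a) = reflMap a := by
  apply LinearEquiv.toLinearMap_injective; apply LinearMap.ext; intro x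
  show reflMap (-a) x = reflMap a x
  simp only [reflMap_apply, coPair_neg_right, smul_neg, neg_smul, neg_neg]

lemma reflMap_self {a : E} (h : a ≠ 0) : reflMap a a = -a := by
  rw [reflMap_apply, coPair_self h]; module

lemma reflMap_involutive (a : E) : ∀ x, reflMap a (reflMap a x) = x := fun x => by
  simp only [reflMap_apply]
  rw [coPair_sub_smul, neg_smul, sub_neg_eq_add, sub_add_cancel]

lemma reflMap_mul_self (a : E) : reflMap a * reflMap a = 1 := by
  apply LinearEquiv.toLinearMap_injective; apply LinearMap.ext; intro x
  exact reflMap_involutive a x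

lemma reflMap_inv (a : E) : (reflMap a)⁻¹ = reflMap a := by
  rw [eq_comm, eq_inv_iff_mul_eq_one, reflMap_mul_self]

lemma reflMap_inner (a x y : E) : ⟪reflMap a x, reflMap a y⟫_ℝ = ⟪x, y⟫_ℝ := by
  by_cases h : a = 0
  · simp [coPair, h]
  · have h2 : ⟪a,a⟫_ℝ ≠ 0 := ne_of_gt (inner_self_pos' h)
    simp only [reflMap_apply, coPair]
    rw [inner_sub_left, inner_sub_right, inner_sub_right, real_inner_smul_left,
      real_inner_smul_left, real_inner_smul_right, real_inner_smul_right]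
    rw [real_inner_comm a y] 
    field_simp; ring

lemma reflMap_fix {a x : E} (h : ⟪x, a⟫_ℝ = 0) : reflMap a x = x := by
  simp [reflMap_apply, coPair, h]

end Dev
section Dev2
variable {E : Type*} [NormedAddCommGroup E] [InnerProductSpace ℝ E]
variable {Δ : Set E} {l : ℕ} {sr : Fin l → E}

/-- orthogonal and preserves the root set, in both directions. -/
def IsGood (Δ : Set E) (w : E ≃ₗ[ℝ] E) : Prop :=
  (∀ x y : E, ⟪w x, w y⟫_ℝ = ⟪x, y⟫_ℝ) ∧ (∀ a ∈ Δ, w a ∈ Δ) ∧ (∀ a ∈ Δ, w⁻¹ a ∈ Δ)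

lemma LinearEquiv.apply_inv_apply' (w : E ≃ₗ[ℝ] E) (u : E) : w (w⁻¹ u) = u := by
  show (w * w⁻¹) u = u
  rw [mul_inv_cancel]; rfl
lemma LinearEquiv.inv_apply_apply' (w : E ≃ₗ[ℝ] E) (u : E) : w⁻¹ (w u) = u :=
  w.symm_apply_apply u

lemma IsRootSystem.ne_zero (hΔ : IsRootSystem Δ) {a : E} (ha : a ∈ Δ) : a ≠ 0 :=
  fun h => hΔ.not_zero (h ▸ ha)

lemma reflMap_root_mem (hΔ : IsRootSystem Δ) {a b : E} (ha : a ∈ Δ) (hb : b ∈ Δ) :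
    reflMap a b ∈ Δ := hΔ.reflect_mem a ha b hb

lemma IsRootSystem.neg_mem (hΔ : IsRootSystem Δ) {a : E} (ha : a ∈ Δ) : -a ∈ Δ := by
  have := reflMap_root_mem hΔ ha ha
  rwa [reflMap_self (hΔ.ne_zero ha)] at this

lemma isGood_of_mem (hΔ : IsRootSystem Δ) {w : E ≃ₗ[ℝ] E} (hw : w ∈ weylGroup Δ) :
    IsGood Δ w := by
  induction hw using Subgroup.closure_induction with
  | mem g hg =>
    obtain ⟨a, haΔ, hrefl⟩ := hg
    rw [hrefl.eq_reflMap]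
    exact ⟨reflMap_inner a, fun b hb => reflMap_root_mem hΔ haΔ hb,
      fun b hb => by rw [reflMap_inv]; exact reflMap_root_mem hΔ haΔ hb⟩
  | one => exact ⟨fun x y => rfl, fun b hb => hb, fun b hb => hb⟩
  | mul x y hx hy ihx ihy =>
    refine ⟨fun u v => by rw [show (x*y) u = x (y u) from rfl,
        show (x*y) v = x (y v) from rfl, ihx.1, ihy.1],
      fun b hb => ihx.2.1 _ (ihy.2.1 b hb), fun b hb => ?_⟩
    rw [mul_inv_rev]
    exact ihy.2.2 _ (ihx.2.2 b hb)
  | inv x hx ihx =>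
    refine ⟨fun u v => ?_, ihx.2.2, by rw [inv_inv]; exact ihx.2.1⟩
    rw [← ihx.1 (x⁻¹ u) (x⁻¹ v), x.apply_inv_apply', x.apply_inv_apply']

lemma IsGood.coPair_map {w : E ≃ₗ[ℝ] E} (hw : IsGood Δ w) (x b : E) :
    coPair (w x) (w b) = coPair x b := by
  unfold coPair; rw [hw.1, hw.1]

lemma IsGood.coPair_inv {w : E ≃ₗ[ℝ] E} (hw : IsGood Δ w) (x b : E) :
    coPair (w x) b = coPair x (w⁻¹ b) := by
  have := hw.coPair_map x (w⁻¹ b)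
  rw [w.apply_inv_apply'] at this; exact this

lemma IsGood.norm_map {w : E ≃ₗ[ℝ] E} (hw : IsGood Δ w) (x : E) : ‖w x‖ = ‖x‖ := by
  have h := hw.1 x x
  rw [real_inner_self_eq_norm_sq, real_inner_self_eq_norm_sq] at h
  nlinarith [norm_nonneg (w x), norm_nonneg x]

lemma reflMap_conj {w : E ≃ₗ[ℝ] E} (hw : IsGood Δ w) (b : E) :
    w * reflMap b * w⁻¹ = reflMap (w b) := by
  apply LinearEquiv.toLinearMap_injective; apply LinearMap.ext; intro x
  show w (reflMap b (w⁻¹ x)) = reflMap (w b) x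
  simp only [reflMap_apply]
  rw [map_sub, map_smul, w.apply_inv_apply']
  have h : coPair (w⁻¹ x) b = coPair x (w b) := by
    have := hw.coPair_map (w⁻¹ x) b
    rw [w.apply_inv_apply'] at this; exact this.symm
  rw [h]

lemma reflMap_mem_weyl (hΔ : IsRootSystem Δ) {a : E} (ha : a ∈ Δ) :
    reflMap a ∈ weylGroup Δ :=
  Subgroup.subset_closure ⟨a, ha, reflMap_isReflectionIn a⟩

lemma simple_mem_weyl (hsr : IsBase Δ sr) {g : E ≃ₗ[ℝ] E}
    (hg : IsSimpleReflection Δ sr g) : g ∈ weylGroup Δ := by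
  obtain ⟨i, hi⟩ := hg
  rw [hi.eq_reflMap]
  exact Subgroup.subset_closure ⟨sr i, hsr.mem i, reflMap_isReflectionIn _⟩

lemma word_mem_weyl (hsr : IsBase Δ sr) {L : List (E ≃ₗ[ℝ] E)}
    (hL : ∀ g ∈ L, IsSimpleReflection Δ sr g) : L.prod ∈ weylGroup Δ := by
  induction L with
  | nil => exact one_mem _
  | cons g t ih =>
    rw [List.prod_cons]
    exact mul_mem (simple_mem_weyl hsr (hL g (by simp))) (ih fun x hx => hL x (by simp [hx]))

lemma IsSimpleReflection.inv_eq {g : E ≃ₗ[ℝ] E} (hg : IsSimpleReflection Δ sr g) :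
    g⁻¹ = g := by
  obtain ⟨i, hi⟩ := hg
  rw [hi.eq_reflMap, reflMap_inv]

lemma word_inv (L : List (E ≃ₗ[ℝ] E)) (h : ∀ g ∈ L, IsSimpleReflection Δ sr g) :
    ∃ L' : List (E ≃ₗ[ℝ] E), (∀ g ∈ L', IsSimpleReflection Δ sr g) ∧
      L'.length = L.length ∧ L'.prod = L.prod⁻¹ := by
  induction L with
  | nil => exact ⟨[], by simp, by simp, by simp⟩
  | cons g t ih =>
    obtain ⟨t', ht', hlen, hprod⟩ := ih (fun x hx => h x (by simp [hx]))
    have hg : IsSimpleReflection Δ sr g := h g (by simp)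
    refine ⟨t' ++ [g], ?_, by simp [hlen], ?_⟩
    · intro x hx
      rcases List.mem_append.mp hx with hx | hx
      · exact ht' x hx
      · rw [List.mem_singleton] at hx; subst hx; exact hg
    · rw [List.prod_append, List.prod_singleton, List.prod_cons, mul_inv_rev, hprod, hg.inv_eq]

lemma exists_word_of_mem_closure {s : Set (E ≃ₗ[ℝ] E)} (hinv : ∀ g ∈ s, g⁻¹ = g)
    {w : E ≃ₗ[ℝ] E} (hw : w ∈ Subgroup.closure s) :
    ∃ L : List (E ≃ₗ[ℝ] E), (∀ g ∈ L, g ∈ s) ∧ L.prod = w := by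
  induction hw using Subgroup.closure_induction with
  | mem g hg => exact ⟨[g], by simpa using hg, by simp⟩
  | one => exact ⟨[], by simp, by simp⟩
  | mul x y hx hy ihx ihy =>
    obtain ⟨L₁, h1, p1⟩ := ihx; obtain ⟨L₂, h2, p2⟩ := ihy
    refine ⟨L₁ ++ L₂, ?_, by rw [List.prod_append, p1, p2]⟩
    intro g hg; rcases List.mem_append.mp hg with hg | hg
    · exact h1 g hg
    · exact h2 g hg
  | inv x hx ihx =>
    obtain ⟨L, hL, pL⟩ := ihx
    refine ⟨L.reverse, fun g hg => hL g (List.mem_reverse.mp hg), ?_⟩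
    rw [List.prod_reverse_noncomm, ← pL]
    congr 1
    rw [show L.map (fun g => g⁻¹) = L.map id from List.map_congr_left fun g hg => hinv g (hL g hg),
      List.map_id]

end Dev2
section Dev3
variable {E : Type*} [NormedAddCommGroup E] [InnerProductSpace ℝ E]
variable {Δ : Set E} {l : ℕ} {sr : Fin l → E} {lam : E}

/-- `x` is a nonnegative integer combination of the simple roots. -/
def PosComb (sr : Fin l → E) (x : E) : Prop := ∃ c : Fin l → ℕ, x = ∑ i, (c i : ℝ) • sr i

lemma pos_or_neg (hsr : IsBase Δ sr) {a : E} (ha : a ∈ Δ) :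
    PosComb sr a ∨ PosComb sr (-a) := by
  rcases hsr.decomp a ha with ⟨c, hc⟩ | ⟨c, hc⟩
  · exact Or.inl ⟨c, hc⟩
  · exact Or.inr ⟨c, by rw [hc, neg_neg]⟩

lemma not_pos_and_neg (hsr : IsBase Δ sr) {a : E} (h0 : a ≠ 0) :
    ¬(PosComb sr a ∧ PosComb sr (-a)) := by
  rintro ⟨⟨c, hc⟩, ⟨c', hc'⟩⟩
  have hsum : ∑ i, ((c i : ℝ) + (c' i : ℝ)) • sr i = 0 := by
    have h1 : a + -a = 0 := by abel
    nth_rewrite 1 [hc] at h1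
    nth_rewrite 1 [hc'] at h1
    rw [← h1, ← Finset.sum_add_distrib]
    apply Finset.sum_congr rfl
    intro i _; rw [add_smul]
  have hz := Fintype.linearIndependent_iff.mp hsr.indep _ hsum
  apply h0
  rw [hc]
  apply Finset.sum_eq_zero
  intro i _
  have := hz i
  have hci : (c i : ℝ) = 0 := by
    have h1 : (0:ℝ) ≤ (c i : ℝ) := Nat.cast_nonneg _
    have h2 : (0:ℝ) ≤ (c' i : ℝ) := Nat.cast_nonneg _
    linarith
  rw [hci, zero_smul]

lemma span_range_sr (hΔ : IsRootSystem Δ) (hsr : IsBase Δ sr) :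
    ⊤ ≤ Submodule.span ℝ (Set.range sr) := by
  rw [← hΔ.span_top]
  apply Submodule.span_le.mpr
  intro a ha
  have key : ∀ c : Fin l → ℕ, (∑ i, (c i : ℝ) • sr i) ∈ Submodule.span ℝ (Set.range sr) := by
    intro c
    apply Submodule.sum_mem
    intro i _
    exact Submodule.smul_mem _ _ (Submodule.subset_span ⟨i, rfl⟩)
  rcases hsr.decomp a ha with ⟨c, hc⟩ | ⟨c, hc⟩
  · rw [hc]; exact key c
  · rw [hc]; exact Submodule.neg_mem _ (key c)

/-- The basis of simple roots. -/
def srBasis (hΔ : IsRootSystem Δ) (hsr : IsBase Δ sr) : Module.Basis (Fin l) ℝ E :=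
  Module.Basis.mk hsr.indep (span_range_sr hΔ hsr)

/-- The height functional: sum of the coordinates w.r.t. the simple roots. -/
def htF (hΔ : IsRootSystem Δ) (hsr : IsBase Δ sr) : E →ₗ[ℝ] ℝ :=
  (srBasis hΔ hsr).sumCoords

lemma htF_sr (hΔ : IsRootSystem Δ) (hsr : IsBase Δ sr) (i : Fin l) :
    htF hΔ hsr (sr i) = 1 := by
  have h : sr i = srBasis hΔ hsr i := by rw [srBasis, Module.Basis.coe_mk]
  rw [htF, h, Module.Basis.sumCoords_self_apply]

lemma htF_posComb (hΔ : IsRootSystem Δ) (hsr : IsBase Δ sr) {x : E} (c : Fin l → ℕ)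
    (hc : x = ∑ i, (c i : ℝ) • sr i) : htF hΔ hsr x = (∑ i, c i : ℕ) := by
  rw [hc, map_sum]
  push_cast
  apply Finset.sum_congr rfl
  intro i _
  rw [map_smul, htF_sr, smul_eq_mul, mul_one]

lemma htF_pos_of_ne (hΔ : IsRootSystem Δ) (hsr : IsBase Δ sr) {x : E}
    (hx : PosComb sr x) (h0 : x ≠ 0) : ∃ n : ℕ, htF hΔ hsr x = n ∧ 1 ≤ n := by
  obtain ⟨c, hc⟩ := hx
  refine ⟨∑ i, c i, htF_posComb hΔ hsr c hc, ?_⟩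
  by_contra h
  push_neg at h
  interval_cases h' : (∑ i, c i)
  · apply h0
    rw [hc]
    apply Finset.sum_eq_zero
    intro i _
    have : c i = 0 := by
      have := Finset.sum_eq_zero_iff.mp h' i (Finset.mem_univ i)
      exact this
    rw [this]; simp

lemma posComb_eq_sr_of_htF_one (hΔ : IsRootSystem Δ) (hsr : IsBase Δ sr) {x : E}
    (hx : PosComb sr x) (hfx : htF hΔ hsr x = 1) : ∃ i, x = sr i := by
  obtain ⟨c, hc⟩ := hx
  have hsum : (∑ i, c i) = 1 := by
    have := htF_posComb hΔ hsr c hc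
    rw [hfx] at this
    exact_mod_cast this.symm
  have hex : ∃ i, c i ≠ 0 := by
    by_contra h
    push_neg at h
    rw [Finset.sum_eq_zero (fun i _ => h i)] at hsum
    exact one_ne_zero hsum.symm
  obtain ⟨i, hi⟩ := hex
  have hle : c i ≤ 1 := hsum ▸ Finset.single_le_sum (fun j _ => Nat.zero_le _) (Finset.mem_univ i)
  have hci : c i = 1 := le_antisymm hle (Nat.one_le_iff_ne_zero.mpr hi)
  have hrest : ∀ j, j ≠ i → c j = 0 := by
    intro j hj
    have h2 : c i + ∑ k ∈ Finset.univ.erase i, c k = 1 := by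
      rw [Finset.add_sum_erase _ _ (Finset.mem_univ i)]; exact hsum
    rw [hci] at h2
    have h3 : ∑ k ∈ Finset.univ.erase i, c k = 0 := by omega
    exact Finset.sum_eq_zero_iff.mp h3 j (Finset.mem_erase.mpr ⟨hj, Finset.mem_univ j⟩)
  refine ⟨i, ?_⟩
  rw [hc, Finset.sum_eq_single i]
  · rw [hci]; simp
  · intro j _ hj; rw [hrest j hj]; simp
  · intro h; exact absurd (Finset.mem_univ i) h

lemma inner_sr_nonneg (hΔ : IsRootSystem Δ) (hsr : IsBase Δ sr) {μ : E}
    (hdom : ∀ i, 0 ≤ coPair μ (sr i)) (i : Fin l) : 0 ≤ ⟪μ, sr i⟫_ℝ := by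
  have hpos : 0 < ⟪sr i, sr i⟫_ℝ := inner_self_pos' (hΔ.ne_zero (hsr.mem i))
  have := hdom i
  unfold coPair at this
  rw [div_nonneg_iff] at this
  rcases this with ⟨h1, _⟩ | ⟨_, h2⟩
  · linarith
  · linarith

lemma inner_posComb_nonneg (hΔ : IsRootSystem Δ) (hsr : IsBase Δ sr) {μ x : E}
    (hdom : ∀ i, 0 ≤ coPair μ (sr i)) (hx : PosComb sr x) : 0 ≤ ⟪μ, x⟫_ℝ := by
  obtain ⟨c, hc⟩ := hx
  rw [hc, inner_sum]
  apply Finset.sum_nonneg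
  intro i _
  rw [real_inner_smul_right]
  exact mul_nonneg (Nat.cast_nonneg _) (inner_sr_nonneg hΔ hsr hdom i)

lemma coPair_lam_posroot (hΔ : IsRootSystem Δ) (hsr : IsBase Δ sr)
    (hlam : IsMinuscule Δ sr lam) {b : E} (hb : b ∈ Δ) (hp : PosComb sr b) :
    coPair lam b = 0 ∨ coPair lam b = 1 := by
  obtain ⟨z, hz⟩ := hlam.1.1 b hb
  have h0 : 0 ≤ coPair lam b := by
    have hpos : 0 < ⟪b, b⟫_ℝ := inner_self_pos' (hΔ.ne_zero hb)
    have hnum : 0 ≤ ⟪lam, b⟫_ℝ := inner_posComb_nonneg hΔ hsr hlam.1.2 hp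
    unfold coPair
    positivity
  have h1 : coPair lam b ≤ 1 := hlam.2 b ⟨hb, hp⟩
  rw [hz] at h0 h1 ⊢
  have hz0 : (0:ℤ) ≤ z := by exact_mod_cast h0
  have hz1 : z ≤ 1 := by exact_mod_cast h1
  interval_cases z
  · left; norm_num
  · right; norm_num

lemma coPair_lam_root (hΔ : IsRootSystem Δ) (hsr : IsBase Δ sr)
    (hlam : IsMinuscule Δ sr lam) {b : E} (hb : b ∈ Δ) :
    coPair lam b = -1 ∨ coPair lam b = 0 ∨ coPair lam b = 1 := by
  rcases pos_or_neg hsr hb with hp | hn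
  · rcases coPair_lam_posroot hΔ hsr hlam hb hp with h | h
    · exact Or.inr (Or.inl h)
    · exact Or.inr (Or.inr h)
  · have hnb : -b ∈ Δ := hΔ.neg_mem hb
    rcases coPair_lam_posroot hΔ hsr hlam hnb hn with h | h
    · have : coPair lam b = -coPair lam (-b) := by rw [← coPair_neg_right, neg_neg]
      rw [this, h]; right; left; norm_num
    · have : coPair lam b = -coPair lam (-b) := by rw [← coPair_neg_right, neg_neg]
      rw [this, h]; left; norm_num

lemma coPair_wlam_root (hΔ : IsRootSystem Δ) (hsr : IsBase Δ sr)
    (hlam : IsMinuscule Δ sr lam) {w : E ≃ₗ[ℝ] E} (hw : w ∈ weylGroup Δ) {b : E}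
    (hb : b ∈ Δ) :
    coPair (w lam) b = -1 ∨ coPair (w lam) b = 0 ∨ coPair (w lam) b = 1 := by
  have hg := isGood_of_mem hΔ hw
  rw [hg.coPair_inv]
  exact coPair_lam_root hΔ hsr hlam (hg.2.2 b hb)

end Dev3
section Dev4
variable {E : Type*} [NormedAddCommGroup E] [InnerProductSpace ℝ E]
variable {Δ : Set E} {l : ℕ} {sr : Fin l → E} {lam : E}

lemma posComb_sr (sr : Fin l → E) (i : Fin l) : PosComb sr (sr i) := by
  refine ⟨fun j => if j = i then 1 else 0, ?_⟩
  rw [Finset.sum_eq_single i]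
  · simp
  · intro j _ hj; simp [hj]
  · intro h; exact absurd (Finset.mem_univ i) h

/-- The key "flip" lemma: a simple reflection permutes the positive roots other
than its own simple root. -/
lemma flip_lemma (hΔ : IsRootSystem Δ) (hsr : IsBase Δ sr) (i : Fin l) {b : E}
    (hb : b ∈ Δ) (hpos : PosComb sr b) (hne : b ≠ sr i) :
    reflMap (sr i) b ∈ Δ ∧ PosComb sr (reflMap (sr i) b) := by
  have hmem : reflMap (sr i) b ∈ Δ := reflMap_root_mem hΔ (hsr.mem i) hb
  refine ⟨hmem, ?_⟩
  rcases pos_or_neg hsr hmem with h | h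
  · exact h
  · exfalso
    obtain ⟨c, hc⟩ := hpos
    obtain ⟨c', hc'⟩ := h
    set t := coPair b (sr i) with ht
    have hrb : reflMap (sr i) b = b - t • sr i := rfl
    set d : Fin l → ℝ := fun j => (c j : ℝ) + (c' j : ℝ) - (if j = i then t else 0) with hd
    have e2 : ∑ j, (if j = i then t else 0) • sr j = t • sr i := by
      rw [Finset.sum_eq_single i]
      · simp
      · intro j _ hj; simp [hj]
      · intro h; exact absurd (Finset.mem_univ i) h
    have hsum0 : ∑ j, d j • sr j = 0 := by
      have e1 : ∑ j, d j • sr j =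
          (∑ j, (c j : ℝ) • sr j) + (∑ j, (c' j : ℝ) • sr j)
            - ∑ j, (if j = i then t else 0) • sr j := by
        rw [← Finset.sum_add_distrib, ← Finset.sum_sub_distrib]
        apply Finset.sum_congr rfl
        intro j _
        rw [hd]; rw [sub_smul, add_smul]
      rw [e1, e2, ← hc, ← hc']
      rw [hrb]
      abel
    have hz := Fintype.linearIndependent_iff.mp hsr.indep d hsum0
    have hcz : ∀ j, j ≠ i → (c j : ℝ) = 0 := by
      intro j hj
      have := hz j
      rw [hd] at this
      simp only [if_neg hj, sub_zero] at this
      have h1 : (0:ℝ) ≤ (c j : ℝ) := Nat.cast_nonneg _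
      have h2 : (0:ℝ) ≤ (c' j : ℝ) := Nat.cast_nonneg _
      linarith
    have hbci : b = (c i : ℝ) • sr i := by
      rw [hc, Finset.sum_eq_single i]
      · intro j _ hj; rw [hcz j hj, zero_smul]
      · intro h; exact absurd (Finset.mem_univ i) h
    have := hΔ.reduced (sr i) (hsr.mem i) (c i : ℝ) (hbci ▸ hb)
    rcases this with h1 | h1
    · apply hne; rw [hbci, h1, one_smul]
    · have : (0:ℝ) ≤ (c i : ℝ) := Nat.cast_nonneg _
      rw [h1] at this; linarith

/-- The exchange lemma. -/
lemma exchange_lemma (hΔ : IsRootSystem Δ) (hsr : IsBase Δ sr) :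
    ∀ L : List (E ≃ₗ[ℝ] E), (∀ g ∈ L, IsSimpleReflection Δ sr g) → ∀ i : Fin l,
      PosComb sr (-(L.prod (sr i))) →
      ∃ L' : List (E ≃ₗ[ℝ] E), (∀ g ∈ L', IsSimpleReflection Δ sr g) ∧
        L'.length + 1 = L.length ∧ L'.prod = L.prod * reflMap (sr i) := by
  intro L
  induction L with
  | nil =>
    intro _ i hneg
    exfalso
    rw [List.prod_nil] at hneg
    exact not_pos_and_neg hsr (hΔ.ne_zero (hsr.mem i))
      ⟨posComb_sr sr i, hneg⟩
  | cons g t ih =>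
    intro hL i hneg
    have hg : IsSimpleReflection Δ sr g := hL g (by simp)
    have ht : ∀ x ∈ t, IsSimpleReflection Δ sr x := fun x hx => hL x (by simp [hx])
    obtain ⟨j, hj⟩ := hg
    have hgr : g = reflMap (sr j) := hj.eq_reflMap
    have hvW : t.prod ∈ weylGroup Δ := word_mem_weyl hsr ht
    have hvG := isGood_of_mem hΔ hvW
    have hvi : t.prod (sr i) ∈ Δ := hvG.2.1 (sr i) (hsr.mem i)
    have hprodc : (g :: t).prod (sr i) = g (t.prod (sr i)) := by
      rw [List.prod_cons]; rfl
    rcases pos_or_neg hsr hvi with hp | hn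
    · -- t.prod (sr i) is positive
      by_cases hcase : t.prod (sr i) = sr j
      · -- exchange happens here
        refine ⟨t, ht, by simp, ?_⟩
        have hconj : g = t.prod * reflMap (sr i) * (t.prod)⁻¹ := by
          rw [hgr, ← hcase, ← reflMap_conj hvG]
        rw [List.prod_cons, hconj]
        rw [inv_mul_cancel_right, mul_assoc, reflMap_mul_self, mul_one]
      · exfalso
        have := flip_lemma hΔ hsr j hvi hp hcase
        apply not_pos_and_neg hsr (hΔ.ne_zero this.1)
        refine ⟨this.2, ?_⟩
        rw [← hgr, ← hprodc]
        exact hneg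
    · -- t.prod (sr i) is negative: use the induction hypothesis
      obtain ⟨t', ht', hlen, hprod⟩ := ih ht i hn
      refine ⟨g :: t', fun x hx => ?_, by simp [← hlen], ?_⟩
      · rcases List.mem_cons.mp hx with hx | hx
        · subst hx; exact hL x (by simp)
        · exact ht' x hx
      · rw [List.prod_cons, List.prod_cons, hprod, mul_assoc]

/-- Every element of the Weyl group is a product of simple reflections. -/
lemma weyl_le_simpleClosure (hΔ : IsRootSystem Δ) (hsr : IsBase Δ sr) :
    weylGroup Δ ≤ Subgroup.closure {g | IsSimpleReflection Δ sr g} := by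
  set SC := Subgroup.closure {g : E ≃ₗ[ℝ] E | IsSimpleReflection Δ sr g} with hSC
  have key : ∀ n : ℕ, ∀ a ∈ Δ, PosComb sr a → htF hΔ hsr a ≤ n → reflMap a ∈ SC := by
    intro n
    induction n with
    | zero =>
      intro a ha hpos hle
      obtain ⟨m, hm, hm1⟩ := htF_pos_of_ne hΔ hsr hpos (hΔ.ne_zero ha)
      rw [hm] at hle
      exfalso
      have : m ≤ 0 := by exact_mod_cast hle
      omega
    | succ n ihn =>
      intro a ha hpos hle
      by_cases hsimple : ∃ i, a = sr i
      · obtain ⟨i, rfl⟩ := hsimple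
        exact Subgroup.subset_closure ⟨i, reflMap_isReflectionIn _⟩
      · push_neg at hsimple
        obtain ⟨c, hc⟩ := hpos
        -- find i with ⟪sr i, a⟫ > 0
        have hself : 0 < ⟪a, a⟫_ℝ := inner_self_pos' (hΔ.ne_zero ha)
        have hsum : ⟪a, a⟫_ℝ = ∑ i, (c i : ℝ) * ⟪sr i, a⟫_ℝ := by
          nth_rewrite 1 [hc]
          rw [sum_inner]
          apply Finset.sum_congr rfl
          intro i _
          rw [real_inner_smul_left]
        have hexi : ∃ i, 0 < (c i : ℝ) * ⟪sr i, a⟫_ℝ := by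
          by_contra h
          push_neg at h
          have : ⟪a, a⟫_ℝ ≤ 0 := by
            rw [hsum]
            exact Finset.sum_nonpos (fun i _ => h i)
          linarith
        obtain ⟨i, hi⟩ := hexi
        have hinner : 0 < ⟪sr i, a⟫_ℝ := by
          rcases lt_or_ge 0 ⟪sr i, a⟫_ℝ with h | h
          · exact h
          · exfalso
            have h1 : (0:ℝ) ≤ (c i : ℝ) := Nat.cast_nonneg _
            nlinarith
        have ht0 : 0 < coPair a (sr i) := by
          have h2 : 0 < ⟪sr i, sr i⟫_ℝ := inner_self_pos' (hΔ.ne_zero (hsr.mem i))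
          unfold coPair
          rw [real_inner_comm (sr i) a]
          positivity
        obtain ⟨z, hz⟩ := hΔ.integral (sr i) (hsr.mem i) a ha
        have hz0 : (0:ℤ) < z := by
          rw [hz] at ht0; exact_mod_cast ht0
        have hz1 : (1:ℝ) ≤ (z:ℝ) := by exact_mod_cast hz0
        have hflip := flip_lemma hΔ hsr i ha ⟨c, hc⟩ (hsimple i)
        have hb : htF hΔ hsr (reflMap (sr i) a) = htF hΔ hsr a - coPair a (sr i) := by
          rw [reflMap_apply, map_sub, map_smul, htF_sr, smul_eq_mul, mul_one]
        have hble : htF hΔ hsr (reflMap (sr i) a) ≤ n := by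
          rw [hb, hz]
          push_cast at hle ⊢
          linarith
        have hmemSC : reflMap (reflMap (sr i) a) ∈ SC := ihn _ hflip.1 hflip.2 hble
        have hgood : IsGood Δ (reflMap (sr i)) :=
          isGood_of_mem hΔ (reflMap_mem_weyl hΔ (hsr.mem i))
        have hconj : reflMap a = reflMap (sr i) * reflMap (reflMap (sr i) a) * (reflMap (sr i))⁻¹ := by
          rw [reflMap_conj hgood]
          congr 1
          exact (reflMap_involutive (sr i) a).symm
        rw [hconj]
        have hsi : reflMap (sr i) ∈ SC :=
          Subgroup.subset_closure ⟨i, reflMap_isReflectionIn _⟩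
        exact mul_mem (mul_mem hsi hmemSC) (inv_mem hsi)
  apply (Subgroup.closure_le _).mpr
  rintro g ⟨a, ha, hrefl⟩
  rw [hrefl.eq_reflMap]
  rcases pos_or_neg hsr ha with hp | hn
  · obtain ⟨m, hm, _⟩ := htF_pos_of_ne hΔ hsr hp (hΔ.ne_zero ha)
    exact key m a ha hp (le_of_eq hm)
  · rw [← reflMap_neg]
    have hna : -a ∈ Δ := hΔ.neg_mem ha
    obtain ⟨m, hm, _⟩ := htF_pos_of_ne hΔ hsr hn (hΔ.ne_zero hna)
    exact key m (-a) hna hn (le_of_eq hm)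

lemma exists_word (hΔ : IsRootSystem Δ) (hsr : IsBase Δ sr) {w : E ≃ₗ[ℝ] E}
    (hw : w ∈ weylGroup Δ) :
    ∃ L : List (E ≃ₗ[ℝ] E), (∀ g ∈ L, IsSimpleReflection Δ sr g) ∧ L.prod = w := by
  have := weyl_le_simpleClosure hΔ hsr hw
  exact exists_word_of_mem_closure (fun g hg => IsSimpleReflection.inv_eq (Δ := Δ) hg) this

lemma weylLength_le (Δ : Set E) (sr : Fin l → E) {L : List (E ≃ₗ[ℝ] E)}
    (hL : ∀ g ∈ L, IsSimpleReflection Δ sr g) :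
    weylLength Δ sr L.prod ≤ L.length :=
  Nat.sInf_le ⟨L, rfl, hL, rfl⟩

lemma exists_min_word (hΔ : IsRootSystem Δ) (hsr : IsBase Δ sr) {w : E ≃ₗ[ℝ] E}
    (hw : w ∈ weylGroup Δ) :
    ∃ L : List (E ≃ₗ[ℝ] E), (∀ g ∈ L, IsSimpleReflection Δ sr g) ∧ L.prod = w ∧
      L.length = weylLength Δ sr w := by
  obtain ⟨L₀, hL₀, hp₀⟩ := exists_word hΔ hsr hw
  have hne : {n | ∃ L : List (E ≃ₗ[ℝ] E), L.length = n ∧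
      (∀ g ∈ L, IsSimpleReflection Δ sr g) ∧ L.prod = w}.Nonempty :=
    ⟨L₀.length, L₀, rfl, hL₀, hp₀⟩
  obtain ⟨L, hlen, hL, hp⟩ := Nat.sInf_mem hne
  exact ⟨L, hL, hp, hlen⟩

/-- If `w (sr i)` is a negative root then multiplying by `s_i` decreases length. -/
lemma length_decrease (hΔ : IsRootSystem Δ) (hsr : IsBase Δ sr) {w : E ≃ₗ[ℝ] E}
    (hw : w ∈ weylGroup Δ) {i : Fin l} (hneg : PosComb sr (-(w (sr i)))) :
    weylLength Δ sr (w * reflMap (sr i)) < weylLength Δ sr w := by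
  obtain ⟨L, hL, hp, hlen⟩ := exists_min_word hΔ hsr hw
  obtain ⟨L', hL', hlen', hp'⟩ := exchange_lemma hΔ hsr L hL i (by rw [hp]; exact hneg)
  have h1 : weylLength Δ sr (w * reflMap (sr i)) ≤ L'.length := by
    have := weylLength_le Δ sr hL'
    rwa [hp', hp] at this
  omega

/-- If `w (sr i)` is a positive root then multiplying by `s_i` increases length. -/
lemma length_increase (hΔ : IsRootSystem Δ) (hsr : IsBase Δ sr) {w : E ≃ₗ[ℝ] E}
    (hw : w ∈ weylGroup Δ) {i : Fin l} (hpos : PosComb sr (w (sr i))) :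
    weylLength Δ sr w < weylLength Δ sr (w * reflMap (sr i)) := by
  have hsi : reflMap (sr i) ∈ weylGroup Δ := reflMap_mem_weyl hΔ (hsr.mem i)
  have hw' : w * reflMap (sr i) ∈ weylGroup Δ := mul_mem hw hsi
  have hneg : PosComb sr (-((w * reflMap (sr i)) (sr i))) := by
    have : (w * reflMap (sr i)) (sr i) = w (reflMap (sr i) (sr i)) := rfl
    rw [this, reflMap_self (hΔ.ne_zero (hsr.mem i)), map_neg, neg_neg]
    exact hpos
  have := length_decrease hΔ hsr hw' hneg
  rwa [mul_assoc, reflMap_mul_self, mul_one] at this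

lemma parabolic_le_weyl (hsr : IsBase Δ sr) : parabolic Δ sr lam ≤ weylGroup Δ := by
  apply (Subgroup.closure_le _).mpr
  rintro g ⟨i, _, hrefl⟩
  exact simple_mem_weyl hsr ⟨i, hrefl⟩

lemma parabolic_fix {v : E ≃ₗ[ℝ] E} (hv : v ∈ parabolic Δ sr lam) : v lam = lam := by
  induction hv using Subgroup.closure_induction with
  | mem g hg =>
    obtain ⟨i, hzero, hrefl⟩ := hg
    rw [hrefl lam, hzero, zero_smul, sub_zero]
  | one => rfl
  | mul x y hx hy ihx ihy =>
    show x (y lam) = lam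
    rw [ihy, ihx]
  | inv x hx ihx =>
    nth_rewrite 1 [← ihx]
    exact x.inv_apply_apply' lam

end Dev4
section Dev5
variable {E : Type*} [NormedAddCommGroup E] [InnerProductSpace ℝ E]
variable {Δ : Set E} {l : ℕ} {sr : Fin l → E} {lam : E}

lemma htF_reflMap_apply (hΔ : IsRootSystem Δ) (hsr : IsBase Δ sr) (i : Fin l) (x : E) :
    htF hΔ hsr (reflMap (sr i) x) = htF hΔ hsr x - coPair x (sr i) := by
  rw [reflMap_apply, map_sub, map_smul, htF_sr, smul_eq_mul, mul_one]

/-- Any word of simple reflections moves `lam` down by at most its length. -/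
lemma word_htF_bound (hΔ : IsRootSystem Δ) (hsr : IsBase Δ sr)
    (hlam : IsMinuscule Δ sr lam) :
    ∀ L : List (E ≃ₗ[ℝ] E), (∀ g ∈ L, IsSimpleReflection Δ sr g) →
      htF hΔ hsr lam - htF hΔ hsr (L.prod lam) ≤ L.length := by
  intro L
  induction L with
  | nil => simp
  | cons g t ih =>
    intro hL
    have ht : ∀ x ∈ t, IsSimpleReflection Δ sr x := fun x hx => hL x (by simp [hx])
    obtain ⟨i, hi⟩ := hL g (by simp)
    have hgr : g = reflMap (sr i) := hi.eq_reflMap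
    have happ : (g :: t).prod lam = reflMap (sr i) (t.prod lam) := by
      rw [List.prod_cons, hgr]; rfl
    have hcoP := coPair_wlam_root hΔ hsr hlam (word_mem_weyl hsr ht) (hsr.mem i)
    have hc1 : coPair (t.prod lam) (sr i) ≤ 1 := by
      rcases hcoP with h | h | h <;> rw [h] <;> norm_num
    have hstep := htF_reflMap_apply hΔ hsr i (t.prod lam)
    have hih := ih ht
    rw [happ, hstep]
    simp only [List.length_cons]
    push_cast
    linarith

/-- If `w lam` is dominant then `w` fixes `lam` and lies in the parabolic. -/
lemma dominant_fix (hΔ : IsRootSystem Δ) (hsr : IsBase Δ sr)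
    (hlam : IsMinuscule Δ sr lam) :
    ∀ n : ℕ, ∀ w ∈ weylGroup Δ, weylLength Δ sr w = n →
      (∀ j, 0 ≤ coPair (w lam) (sr j)) → w lam = lam ∧ w ∈ parabolic Δ sr lam := by
  intro n
  induction n using Nat.strong_induction_on with
  | _ n ih =>
    intro w hw hlen hdom
    obtain ⟨L, hL, hpL, hlenL⟩ := exists_min_word hΔ hsr hw
    rcases List.eq_nil_or_concat L with rfl | ⟨L₁, g, rfl⟩
    · rw [List.prod_nil] at hpL
      subst hpL
      exact ⟨rfl, one_mem _⟩
    · have hgmem : g ∈ L₁.concat g := by simp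
      obtain ⟨j, hj⟩ := hL g hgmem
      have hgr : g = reflMap (sr j) := hj.eq_reflMap
      have hL₁ : ∀ x ∈ L₁, IsSimpleReflection Δ sr x := fun x hx => hL x (by simp [hx])
      have hwg : w * g = L₁.prod := by
        rw [← hpL, List.concat_eq_append, List.prod_append, List.prod_singleton,
          mul_assoc, hgr, reflMap_mul_self, mul_one]
      have hlt : weylLength Δ sr (w * g) < weylLength Δ sr w := by
        have h1 : weylLength Δ sr (w * g) ≤ L₁.length := by
          rw [hwg]; exact weylLength_le Δ sr hL₁
        have h2 : (L₁.concat g).length = L₁.length + 1 := by simp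
        omega
      have hneg : PosComb sr (-(w (sr j))) := by
        have hwsr : w (sr j) ∈ Δ := (isGood_of_mem hΔ hw).2.1 (sr j) (hsr.mem j)
        rcases pos_or_neg hsr hwsr with hp | hn
        · exfalso
          have := length_increase hΔ hsr hw hp
          rw [← hgr] at this
          omega
        · exact hn
      have hinner0 : ⟪lam, sr j⟫_ℝ = 0 := by
        have he : ⟪w lam, w (sr j)⟫_ℝ = ⟪lam, sr j⟫_ℝ := (isGood_of_mem hΔ hw).1 _ _
        have h1 : 0 ≤ ⟪lam, sr j⟫_ℝ := inner_sr_nonneg hΔ hsr hlam.1.2 j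
        have h2 : 0 ≤ ⟪w lam, -(w (sr j))⟫_ℝ := inner_posComb_nonneg hΔ hsr hdom hneg
        rw [inner_neg_right] at h2
        linarith
      have hcoP0 : coPair lam (sr j) = 0 := by
        unfold coPair; rw [hinner0]; simp
      have hglam : g lam = lam := by rw [hgr]; exact reflMap_fix hinner0
      have hw'lam : (w * g) lam = w lam := by
        show w (g lam) = w lam
        rw [hglam]
      have hw' : w * g ∈ weylGroup Δ := mul_mem hw (simple_mem_weyl hsr ⟨j, hj⟩)
      have hdom' : ∀ i, 0 ≤ coPair ((w * g) lam) (sr i) := by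
        intro i; rw [hw'lam]; exact hdom i
      have hres := ih (weylLength Δ sr (w * g)) (by omega) (w * g) hw' rfl hdom'
      constructor
      · rw [← hw'lam]; exact hres.1
      · have hgP : g ∈ parabolic Δ sr lam :=
          Subgroup.subset_closure ⟨j, hcoP0, hj⟩
        have : w = (w * g) * g := by
          rw [mul_assoc, hgr, reflMap_mul_self, mul_one]
        rw [this]
        exact mul_mem hres.2 hgP

/-- The greedy algorithm: any `w` can be moved into the parabolic by simple
reflections, in exactly `ht(lam - w lam)` steps. -/
lemma greedy (hΔ : IsRootSystem Δ) (hsr : IsBase Δ sr) (hlam : IsMinuscule Δ sr lam)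
    {w : E ≃ₗ[ℝ] E} (hw : w ∈ weylGroup Δ) :
    ∃ L : List (E ≃ₗ[ℝ] E), (∀ g ∈ L, IsSimpleReflection Δ sr g) ∧
      (L.length : ℝ) = htF hΔ hsr lam - htF hΔ hsr (w lam) ∧
      L.prod * w ∈ parabolic Δ sr lam := by
  haveI : FiniteDimensional ℝ E := Module.Finite.of_basis (srBasis hΔ hsr)
  set f : E →ₗ[ℝ] ℝ := htF hΔ hsr with hf
  set N : ℝ := ‖(LinearMap.toContinuousLinearMap f : E →L[ℝ] ℝ)‖ with hN
  have fbound : ∀ v ∈ weylGroup Δ, f (v lam) ≤ N * ‖lam‖ := by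
    intro v hv
    have h1 := (LinearMap.toContinuousLinearMap f : E →L[ℝ] ℝ).le_opNorm (v lam)
    have h2 : ‖v lam‖ = ‖lam‖ := (isGood_of_mem hΔ hv).norm_map lam
    have h3 : (LinearMap.toContinuousLinearMap f : E →L[ℝ] ℝ) (v lam) = f (v lam) := by
      simp
    rw [h3, Real.norm_eq_abs, h2] at h1
    calc f (v lam) ≤ |f (v lam)| := le_abs_self _
    _ ≤ N * ‖lam‖ := h1
  set C : ℝ := N * ‖lam‖ - f lam with hC
  have Mbound : ∀ v ∈ weylGroup Δ, 0 ≤ (f lam - f (v lam)) + C := by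
    intro v hv
    have := fbound v hv
    rw [hC]
    linarith
  have aux : ∀ n : ℕ, ∀ w ∈ weylGroup Δ, (f lam - f (w lam)) + C ≤ n →
      ∃ L : List (E ≃ₗ[ℝ] E), (∀ g ∈ L, IsSimpleReflection Δ sr g) ∧
        (L.length : ℝ) = f lam - f (w lam) ∧ L.prod * w ∈ parabolic Δ sr lam := by
    intro n
    induction n with
    | zero =>
      intro w hw hle
      by_cases hdom : ∀ j, 0 ≤ coPair (w lam) (sr j)
      · obtain ⟨hfix, hP⟩ := dominant_fix hΔ hsr hlam (weylLength Δ sr w) w hw rfl hdom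
        refine ⟨[], by simp, ?_, ?_⟩
        · rw [hfix]; simp
        · rw [List.prod_nil, one_mul]; exact hP
      · exfalso
        push_neg at hdom
        obtain ⟨j, hjneg⟩ := hdom
        have hm1 : coPair (w lam) (sr j) = -1 := by
          rcases coPair_wlam_root hΔ hsr hlam hw (hsr.mem j) with h | h | h
          · exact h
          · rw [h] at hjneg; linarith
          · rw [h] at hjneg; linarith
        have hw' : reflMap (sr j) * w ∈ weylGroup Δ :=
          mul_mem (reflMap_mem_weyl hΔ (hsr.mem j)) hw
        have hstep : f ((reflMap (sr j) * w) lam) = f (w lam) + 1 := by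
          show f (reflMap (sr j) (w lam)) = f (w lam) + 1
          rw [hf]
          rw [htF_reflMap_apply hΔ hsr j (w lam), hm1]
          ring
        have := Mbound _ hw'
        rw [hstep] at this
        push_cast at hle
        linarith
    | succ n ihn =>
      intro w hw hle
      by_cases hdom : ∀ j, 0 ≤ coPair (w lam) (sr j)
      · obtain ⟨hfix, hP⟩ := dominant_fix hΔ hsr hlam (weylLength Δ sr w) w hw rfl hdom
        refine ⟨[], by simp, ?_, ?_⟩
        · rw [hfix]; simp
        · rw [List.prod_nil, one_mul]; exact hP
      · push_neg at hdom
        obtain ⟨j, hjneg⟩ := hdom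
        have hm1 : coPair (w lam) (sr j) = -1 := by
          rcases coPair_wlam_root hΔ hsr hlam hw (hsr.mem j) with h | h | h
          · exact h
          · rw [h] at hjneg; linarith
          · rw [h] at hjneg; linarith
        have hw' : reflMap (sr j) * w ∈ weylGroup Δ :=
          mul_mem (reflMap_mem_weyl hΔ (hsr.mem j)) hw
        have hstep : f ((reflMap (sr j) * w) lam) = f (w lam) + 1 := by
          show f (reflMap (sr j) (w lam)) = f (w lam) + 1
          rw [hf]
          rw [htF_reflMap_apply hΔ hsr j (w lam), hm1]
          ring
        obtain ⟨L', hL', hlen', hprod'⟩ := ihn (reflMap (sr j) * w) hw' (by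
          rw [hstep]
          push_cast at hle ⊢
          linarith)
        refine ⟨L' ++ [reflMap (sr j)], ?_, ?_, ?_⟩
        · intro x hx
          rcases List.mem_append.mp hx with hx | hx
          · exact hL' x hx
          · rw [List.mem_singleton] at hx; subst hx
            exact ⟨j, reflMap_isReflectionIn _⟩
        · simp only [List.length_append, List.length_singleton]
          push_cast
          linarith
        · rw [List.prod_append, List.prod_singleton, mul_assoc]
          exact hprod'
  exact aux ⌈(f lam - f (w lam)) + C⌉₊ w hw (Nat.le_ceil _)

end Dev5
/-- If `lam` is minuscule, `u ∈ W^P`, and `a` is a positive root whose reflection `s`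
satisfies `ℓ(s u) = ℓ(u) + 1` (lengths in `W^P`), then `a` is a simple root and
`(u(lam), a^∨) = 1`. -/
theorem length_add_one_implies_simple
    {E : Type*} [NormedAddCommGroup E] [InnerProductSpace ℝ E]
    (Δ : Set E) {l : ℕ} (sr : Fin l → E)
    (hΔ : IsRootSystem Δ) (hsr : IsBase Δ sr)
    (lam : E) (hlam : IsMinuscule Δ sr lam)
    (u : E ≃ₗ[ℝ] E) (hu : IsMinRep Δ sr lam u)
    (a : E) (ha : IsPositiveRoot Δ sr a)
    (s : E ≃ₗ[ℝ] E) (hs : IsReflectionIn a s)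
    (hlen : cosetLength Δ sr lam (s * u) = cosetLength Δ sr lam u + 1) :
    (∃ i, a = sr i) ∧ coPair (u lam) a = 1 := by
  obtain ⟨huW, -⟩ := hu
  have haΔ : a ∈ Δ := ha.1
  have hsW : s ∈ weylGroup Δ := Subgroup.subset_closure ⟨a, haΔ, hs⟩
  have hsuW : s * u ∈ weylGroup Δ := mul_mem hsW huW
  set f : E →ₗ[ℝ] ℝ := htF hΔ hsr with hf
  set m := cosetLength Δ sr lam u with hm
  set c := coPair (u lam) a with hc
  have hcval : c = -1 ∨ c = 0 ∨ c = 1 := coPair_wlam_root hΔ hsr hlam huW haΔ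
  obtain ⟨na, hna, hna1⟩ := htF_pos_of_ne hΔ hsr ha.2 (hΔ.ne_zero haΔ)
  have hsulam : (s * u) lam = u lam - c • a := by
    show s (u lam) = _
    rw [hs (u lam)]
  have hfsulam : f ((s * u) lam) = f (u lam) - c * f a := by
    rw [hsulam, map_sub, map_smul, smul_eq_mul]
  -- (B): f lam - f (u lam) ≤ m
  have hBne : {n | ∃ v ∈ parabolic Δ sr lam, n = weylLength Δ sr (u * v)}.Nonempty :=
    ⟨weylLength Δ sr (u * 1), 1, one_mem _, rfl⟩
  obtain ⟨v₀, hv₀P, hmv₀⟩ := Nat.sInf_mem hBne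
  have huv₀W : u * v₀ ∈ weylGroup Δ := mul_mem huW (parabolic_le_weyl hsr hv₀P)
  obtain ⟨L₀, hL₀, hpL₀, hlenL₀⟩ := exists_min_word hΔ hsr huv₀W
  have huv₀lam : (u * v₀) lam = u lam := by
    show u (v₀ lam) = u lam
    rw [parabolic_fix hv₀P]
  have hB : f lam - f (u lam) ≤ (m : ℝ) := by
    have := word_htF_bound hΔ hsr hlam L₀ hL₀
    rw [hpL₀, huv₀lam, hlenL₀, ← hmv₀] at this
    exact_mod_cast this
  -- (A): f lam - f (u lam) + c * f a ≤ m + 1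
  have hAne : {n | ∃ v ∈ parabolic Δ sr lam, n = weylLength Δ sr ((s * u) * v)}.Nonempty :=
    ⟨weylLength Δ sr ((s * u) * 1), 1, one_mem _, rfl⟩
  have hsInfA : sInf {n | ∃ v ∈ parabolic Δ sr lam, n = weylLength Δ sr ((s * u) * v)}
      = m + 1 := hlen
  obtain ⟨v₁, hv₁P, hmv₁⟩ := Nat.sInf_mem hAne
  rw [hsInfA] at hmv₁
  have hsuv₁W : (s * u) * v₁ ∈ weylGroup Δ := mul_mem hsuW (parabolic_le_weyl hsr hv₁P)
  obtain ⟨L₁, hL₁, hpL₁, hlenL₁⟩ := exists_min_word hΔ hsr hsuv₁W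
  have hsuv₁lam : ((s * u) * v₁) lam = (s * u) lam := by
    show (s * u) (v₁ lam) = (s * u) lam
    rw [parabolic_fix hv₁P]
  have hA : f lam - (f (u lam) - c * f a) ≤ (m : ℝ) + 1 := by
    have := word_htF_bound hΔ hsr hlam L₁ hL₁
    rw [hpL₁, hsuv₁lam, hlenL₁, ← hmv₁] at this
    rw [hfsulam] at this
    push_cast at this
    linarith
  -- (C): m + 1 ≤ f lam - f ((s*u) lam)
  obtain ⟨L, hL, hlenL, hqP⟩ := greedy hΔ hsr hlam hsuW
  obtain ⟨L₂, hL₂, hlenL₂, hpL₂⟩ := word_inv L hL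
  have hvdef : (s * u) * (L.prod * (s * u))⁻¹ = L.prod⁻¹ := by group
  have hCle : cosetLength Δ sr lam (s * u) ≤ weylLength Δ sr ((s * u) * (L.prod * (s * u))⁻¹) :=
    Nat.sInf_le ⟨(L.prod * (s * u))⁻¹, inv_mem hqP, rfl⟩
  have hC : (m : ℝ) + 1 ≤ f lam - f (u lam) + c * f a := by
    have h1 : weylLength Δ sr ((s * u) * (L.prod * (s * u))⁻¹) ≤ L.length := by
      rw [hvdef, ← hpL₂]
      have := weylLength_le Δ sr hL₂
      omega
    rw [hlen] at hCle
    have h2 : (m : ℝ) + 1 ≤ (L.length : ℝ) := by exact_mod_cast le_trans hCle h1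
    rw [hlenL, hfsulam] at h2
    linarith
  -- (B'): m ≤ f lam - f (u lam)
  obtain ⟨L₃, hL₃, hlenL₃, hqP₃⟩ := greedy hΔ hsr hlam huW
  obtain ⟨L₄, hL₄, hlenL₄, hpL₄⟩ := word_inv L₃ hL₃
  have hvdef₃ : u * (L₃.prod * u)⁻¹ = L₃.prod⁻¹ := by group
  have hB'le : cosetLength Δ sr lam u ≤ weylLength Δ sr (u * (L₃.prod * u)⁻¹) :=
    Nat.sInf_le ⟨(L₃.prod * u)⁻¹, inv_mem hqP₃, rfl⟩
  have hB' : (m : ℝ) ≤ f lam - f (u lam) := by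
    have h1 : weylLength Δ sr (u * (L₃.prod * u)⁻¹) ≤ L₃.length := by
      rw [hvdef₃, ← hpL₄]
      have := weylLength_le Δ sr hL₄
      omega
    have h2 : (m : ℝ) ≤ (L₃.length : ℝ) := by exact_mod_cast le_trans hB'le h1
    rw [hlenL₃] at h2
    linarith
  -- combine
  have hcfa : c * f a = 1 := by linarith
  have hna1' : (1 : ℝ) ≤ (na : ℝ) := by exact_mod_cast hna1
  rcases hcval with h | h | h
  · exfalso; rw [h, hna] at hcfa; linarith
  · exfalso; rw [h, hna] at hcfa; linarith
  · have hfa1 : f a = 1 := by rw [h] at hcfa; linarith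
    exact ⟨posComb_eq_sr_of_htF_one hΔ hsr ha.2 hfa1, h ▸ rfl⟩
end
end

section
/- If λ is minuscule, u ∈ W^P, and α ∈ Δ⁺ satisfies ℓ(s_α u) = ℓ(u) - (s-1) where s is the Coxeter number, then α = ψ, the highest root, and (u(λ), ψ^∨) = -1. -/
open scoped InnerProductSpace
noncomputable section

variable {E : Type*} [NormedAddCommGroup E] [InnerProductSpace ℝ E]

namespace LDH

lemma coPair_eq (x a : E) : coPair x a = (2 / ⟪a, a⟫_ℝ) * ⟪x, a⟫_ℝ := by
  unfold coPair; ring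

lemma coPair_add_left (x y a : E) : coPair (x + y) a = coPair x a + coPair y a := by
  simp only [coPair_eq, inner_add_left]; ring

lemma coPair_smul_left (c : ℝ) (x a : E) : coPair (c • x) a = c * coPair x a := by
  simp only [coPair_eq, real_inner_smul_left]; ring

lemma coPair_neg_left (x a : E) : coPair (-x) a = -coPair x a := by
  simp only [coPair_eq, inner_neg_left]; ring

lemma coPair_neg_right (x a : E) : coPair x (-a) = -coPair x a := by
  simp only [coPair_eq, inner_neg_left, inner_neg_right, neg_neg]; ring

lemma coPair_sub_left (x y a : E) : coPair (x - y) a = coPair x a - coPair y a := by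
  simp only [coPair_eq, inner_sub_left]; ring

lemma coPair_self (a : E) (h : ⟪a, a⟫_ℝ ≠ 0) : coPair a a = 2 := by
  unfold coPair; field_simp

/-- The reflection in `a` as a linear map. -/
def rmap (a : E) : E →ₗ[ℝ] E where
  toFun x := x - coPair x a • a
  map_add' x y := by rw [coPair_add_left, add_smul]; abel
  map_smul' c x := by rw [coPair_smul_left, RingHom.id_apply, smul_sub, smul_smul]

lemma rmap_apply (a x : E) : rmap a x = x - coPair x a • a := rfl

lemma rmap_invol (a : E) (h : ⟪a, a⟫_ℝ ≠ 0) : Function.Involutive (rmap a) := by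
  intro x
  simp only [rmap_apply, coPair_sub_left, coPair_smul_left, coPair_self a h]
  rw [show coPair x a - coPair x a * 2 = -coPair x a by ring]
  rw [neg_smul]; abel

/-- The reflection in `a` as a linear equivalence. -/
def refl (a : E) (h : ⟪a, a⟫_ℝ ≠ 0) : E ≃ₗ[ℝ] E :=
  LinearEquiv.ofInvolutive (rmap a) (rmap_invol a h)

lemma refl_apply (a : E) (h : ⟪a, a⟫_ℝ ≠ 0) (x : E) :
    refl a h x = x - coPair x a • a := rfl

lemma isReflectionIn_refl (a : E) (h : ⟪a, a⟫_ℝ ≠ 0) : IsReflectionIn a (refl a h) :=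
  fun x => rfl

lemma eq_refl_of_isReflectionIn {a : E} {g : E ≃ₗ[ℝ] E} (h : ⟪a, a⟫_ℝ ≠ 0)
    (hg : IsReflectionIn a g) : g = refl a h := by
  apply LinearEquiv.toLinearMap_injective
  apply LinearMap.ext; intro x
  exact (hg x).trans rfl

lemma refl_mul_self (a : E) (h : ⟪a, a⟫_ℝ ≠ 0) : refl a h * refl a h = 1 := by
  apply LinearEquiv.toLinearMap_injective
  apply LinearMap.ext; intro x
  exact rmap_invol a h x

lemma refl_inv (a : E) (h : ⟪a, a⟫_ℝ ≠ 0) : (refl a h)⁻¹ = refl a h :=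
  inv_eq_of_mul_eq_one_right (refl_mul_self a h)

lemma refl_apply_self (a : E) (h : ⟪a, a⟫_ℝ ≠ 0) : refl a h a = -a := by
  rw [refl_apply, coPair_self a h]
  rw [two_smul]; abel

lemma refl_inner (a : E) (h : ⟪a, a⟫_ℝ ≠ 0) (x y : E) :
    ⟪refl a h x, refl a h y⟫_ℝ = ⟪x, y⟫_ℝ := by
  simp only [refl_apply, coPair_eq, inner_sub_left, inner_sub_right,
    real_inner_smul_left, real_inner_smul_right]
  rw [real_inner_comm a x, real_inner_comm a y]
  field_simp
  ring

lemma refl_neg {a : E} (ha : ⟪a, a⟫_ℝ ≠ 0) (hna : ⟪-a, -a⟫_ℝ ≠ 0) :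
    refl (-a) hna = refl a ha := by
  apply LinearEquiv.toLinearMap_injective
  apply LinearMap.ext; intro x
  show x - coPair x (-a) • (-a) = x - coPair x a • a
  rw [coPair_neg_right, neg_smul, smul_neg, neg_neg]


section RootBasics

variable {Δ : Set E} {l : ℕ} {sr : Fin l → E}

lemma root_inner_pos (hΔ : IsRootSystem Δ) {a : E} (ha : a ∈ Δ) : 0 < ⟪a, a⟫_ℝ :=
  lt_of_le_of_ne real_inner_self_nonneg
    (fun he => hΔ.not_zero (by rwa [inner_self_eq_zero.mp he.symm] at ha))

lemma root_inner_ne (hΔ : IsRootSystem Δ) {a : E} (ha : a ∈ Δ) : ⟪a, a⟫_ℝ ≠ 0 :=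
  (root_inner_pos hΔ ha).ne'

lemma neg_root_mem (hΔ : IsRootSystem Δ) {a : E} (ha : a ∈ Δ) : -a ∈ Δ := by
  have := hΔ.reflect_mem a ha a ha
  rwa [LDH.coPair_self a (root_inner_ne hΔ ha), two_smul, show a - (a + a) = -a by abel] at this

lemma span_range_top (hΔ : IsRootSystem Δ) (hsr : IsBase Δ sr) :
    ⊤ ≤ Submodule.span ℝ (Set.range sr) := by
  rw [← hΔ.span_top]
  apply Submodule.span_le.2
  intro a ha
  rcases hsr.decomp a ha with ⟨c, hc⟩ | ⟨c, hc⟩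
  · rw [hc]
    exact Submodule.sum_mem _ (fun i _ => Submodule.smul_mem _ _
      (Submodule.subset_span (Set.mem_range_self i)))
  · rw [hc]
    exact Submodule.neg_mem _ (Submodule.sum_mem _ (fun i _ => Submodule.smul_mem _ _
      (Submodule.subset_span (Set.mem_range_self i))))

/-- The simple roots as a basis. -/
def base (hΔ : IsRootSystem Δ) (hsr : IsBase Δ sr) : Module.Basis (Fin l) ℝ E :=
  Module.Basis.mk hsr.indep (span_range_top hΔ hsr)

lemma base_apply (hΔ : IsRootSystem Δ) (hsr : IsBase Δ sr) (i : Fin l) :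
    base hΔ hsr i = sr i := Module.Basis.mk_apply _ _ i

/-- Coordinates with respect to the simple roots. -/
def co (hΔ : IsRootSystem Δ) (hsr : IsBase Δ sr) (x : E) (i : Fin l) : ℝ :=
  (base hΔ hsr).repr x i

lemma co_sum (hΔ : IsRootSystem Δ) (hsr : IsBase Δ sr) (d : Fin l → ℝ) (j : Fin l) :
    co hΔ hsr (∑ i, d i • sr i) j = d j := by
  unfold co
  have : (∑ i, d i • sr i) = ∑ i, d i • (base hΔ hsr) i := by
    simp only [base_apply]
  rw [this]
  simp only [map_sum, map_smul, Module.Basis.repr_self]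
  rw [Finset.sum_apply']
  simp [Finsupp.smul_single, Finsupp.single_apply]

lemma sum_co (hΔ : IsRootSystem Δ) (hsr : IsBase Δ sr) (x : E) :
    ∑ i, co hΔ hsr x i • sr i = x := by
  conv_rhs => rw [← (base hΔ hsr).sum_repr x]
  simp only [co, base_apply]

lemma co_add (hΔ : IsRootSystem Δ) (hsr : IsBase Δ sr) (x y : E) (j : Fin l) :
    co hΔ hsr (x + y) j = co hΔ hsr x j + co hΔ hsr y j := by
  unfold co; rw [map_add]; rfl

lemma co_sub (hΔ : IsRootSystem Δ) (hsr : IsBase Δ sr) (x y : E) (j : Fin l) :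
    co hΔ hsr (x - y) j = co hΔ hsr x j - co hΔ hsr y j := by
  unfold co; rw [map_sub]; rfl

lemma co_smul (hΔ : IsRootSystem Δ) (hsr : IsBase Δ sr) (c : ℝ) (x : E) (j : Fin l) :
    co hΔ hsr (c • x) j = c * co hΔ hsr x j := by
  unfold co; rw [map_smul]; rfl

lemma co_neg (hΔ : IsRootSystem Δ) (hsr : IsBase Δ sr) (x : E) (j : Fin l) :
    co hΔ hsr (-x) j = -co hΔ hsr x j := by
  unfold co; rw [map_neg]; rfl

lemma eq_of_co_eq (hΔ : IsRootSystem Δ) (hsr : IsBase Δ sr) {x y : E}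
    (h : ∀ j, co hΔ hsr x j = co hΔ hsr y j) : x = y := by
  rw [← sum_co hΔ hsr x, ← sum_co hΔ hsr y]
  exact Finset.sum_congr rfl (fun j _ => by rw [h j])

/-- The height functional. -/
def hgt (hΔ : IsRootSystem Δ) (hsr : IsBase Δ sr) (x : E) : ℝ := ∑ i, co hΔ hsr x i

lemma hgt_sum (hΔ : IsRootSystem Δ) (hsr : IsBase Δ sr) (d : Fin l → ℝ) :
    hgt hΔ hsr (∑ i, d i • sr i) = ∑ i, d i := by
  unfold hgt
  exact Finset.sum_congr rfl (fun j _ => co_sum hΔ hsr d j)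

lemma hgt_sub (hΔ : IsRootSystem Δ) (hsr : IsBase Δ sr) (x y : E) :
    hgt hΔ hsr (x - y) = hgt hΔ hsr x - hgt hΔ hsr y := by
  unfold hgt
  rw [← Finset.sum_sub_distrib]
  exact Finset.sum_congr rfl (fun j _ => co_sub hΔ hsr x y j)

lemma hgt_smul (hΔ : IsRootSystem Δ) (hsr : IsBase Δ sr) (c : ℝ) (x : E) :
    hgt hΔ hsr (c • x) = c * hgt hΔ hsr x := by
  unfold hgt
  rw [Finset.mul_sum]
  exact Finset.sum_congr rfl (fun j _ => co_smul hΔ hsr c x j)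

lemma hgt_sr (hΔ : IsRootSystem Δ) (hsr : IsBase Δ sr) (i : Fin l) :
    hgt hΔ hsr (sr i) = 1 := by
  have : sr i = ∑ j, (fun k => if k = i then (1:ℝ) else 0) j • sr j := by
    rw [Finset.sum_eq_single i] <;> simp +contextual
  rw [this, hgt_sum, Finset.sum_eq_single i] <;> simp +contextual

/-- Coordinates of a positive root are the (cast) natural number coefficients. -/
lemma pos_co_nonneg (hΔ : IsRootSystem Δ) (hsr : IsBase Δ sr) {a : E}
    (ha : IsPositiveRoot Δ sr a) (j : Fin l) : 0 ≤ co hΔ hsr a j := by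
  obtain ⟨-, c, hc⟩ := ha
  rw [hc, co_sum]
  exact Nat.cast_nonneg _

lemma not_pos_and_neg (hΔ : IsRootSystem Δ) (hsr : IsBase Δ sr) {a : E}
    (ha : IsPositiveRoot Δ sr a) (hb : IsPositiveRoot Δ sr (-a)) : False := by
  have h0 : a = 0 := by
    apply eq_of_co_eq hΔ hsr (y := 0)
    intro j
    have h1 := pos_co_nonneg hΔ hsr ha j
    have h2 := pos_co_nonneg hΔ hsr hb j
    rw [co_neg] at h2
    have : co hΔ hsr (0:E) j = 0 := by
      have : (0:E) = ∑ i, (0:ℝ) • sr i := by simp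
      rw [this, co_sum]
    rw [this]; linarith
  exact hΔ.not_zero (h0 ▸ ha.1)

lemma co_zero (hΔ : IsRootSystem Δ) (hsr : IsBase Δ sr) (j : Fin l) :
    co hΔ hsr (0:E) j = 0 := by
  have : (0:E) = ∑ i, (0:ℝ) • sr i := by simp
  rw [this, co_sum]

lemma pos_or_neg (hΔ : IsRootSystem Δ) (hsr : IsBase Δ sr) {a : E} (ha : a ∈ Δ) :
    IsPositiveRoot Δ sr a ∨ IsPositiveRoot Δ sr (-a) := by
  rcases hsr.decomp a ha with ⟨c, hc⟩ | ⟨c, hc⟩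
  · exact Or.inl ⟨ha, c, hc⟩
  · exact Or.inr ⟨neg_root_mem hΔ ha, c, by rw [hc, neg_neg]⟩

lemma pos_of_co_nonneg (hΔ : IsRootSystem Δ) (hsr : IsBase Δ sr) {a : E} (ha : a ∈ Δ)
    (h : ∀ j, 0 ≤ co hΔ hsr a j) : IsPositiveRoot Δ sr a := by
  rcases pos_or_neg hΔ hsr ha with hp | hp
  · exact hp
  · exfalso
    have h0 : a = 0 := by
      apply eq_of_co_eq hΔ hsr (y := 0)
      intro j
      have h2 := pos_co_nonneg hΔ hsr hp j
      rw [co_neg] at h2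
      rw [co_zero]
      linarith [h j]
    exact hΔ.not_zero (h0 ▸ ha)

lemma one_le_hgt_pos (hΔ : IsRootSystem Δ) (hsr : IsBase Δ sr) {a : E}
    (ha : IsPositiveRoot Δ sr a) : 1 ≤ hgt hΔ hsr a := by
  obtain ⟨haΔ, c, hc⟩ := ha
  have hne : ∃ j, c j ≠ 0 := by
    by_contra h
    push_neg at h
    apply hΔ.not_zero
    have : a = 0 := by rw [hc]; simp [h]
    rwa [this] at haΔ
  obtain ⟨j, hj⟩ := hne
  rw [hc, hgt_sum]
  calc (1:ℝ) ≤ (c j : ℝ) := by exact_mod_cast Nat.one_le_iff_ne_zero.2 hj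
  _ ≤ ∑ i, (c i : ℝ) := Finset.single_le_sum (f := fun i => (c i : ℝ)) (fun i _ => Nat.cast_nonneg _) (Finset.mem_univ j)

end RootBasics

section Weyl

variable {Δ : Set E} {l : ℕ} {sr : Fin l → E}

/-- `g` preserves the inner product. -/
def Orth (g : E ≃ₗ[ℝ] E) : Prop := ∀ x y : E, ⟪g x, g y⟫_ℝ = ⟪x, y⟫_ℝ

lemma mul_apply (g h : E ≃ₗ[ℝ] E) (x : E) : (g * h) x = g (h x) := rfl

lemma one_apply (x : E) : (1 : E ≃ₗ[ℝ] E) x = x := rfl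

lemma apply_inv_apply (g : E ≃ₗ[ℝ] E) (x : E) : g (g⁻¹ x) = x :=
  g.apply_symm_apply x

lemma inv_apply_apply (g : E ≃ₗ[ℝ] E) (x : E) : g⁻¹ (g x) = x :=
  g.symm_apply_apply x

lemma coPair_map {g : E ≃ₗ[ℝ] E} (hg : Orth g) (x a : E) :
    coPair (g x) (g a) = coPair x a := by
  unfold coPair; rw [hg, hg]

lemma coPair_map' {g : E ≃ₗ[ℝ] E} (hg : Orth g) (x b : E) :
    coPair (g x) b = coPair x (g⁻¹ b) := by
  conv_lhs => rw [← apply_inv_apply g b]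
  exact coPair_map hg x (g⁻¹ b)

/-- Good properties of Weyl group elements. -/
def GoodW (Δ : Set E) (g : E ≃ₗ[ℝ] E) : Prop :=
  Orth g ∧ (∀ a ∈ Δ, g a ∈ Δ) ∧ (∀ a ∈ Δ, g⁻¹ a ∈ Δ)

lemma goodW_of_mem_weyl (hΔ : IsRootSystem Δ) : ∀ g ∈ weylGroup Δ, GoodW Δ g := by
  intro g hg
  induction hg using Subgroup.closure_induction with
  | mem s hs =>
    obtain ⟨a, ha, hrefl⟩ := hs
    have hne := root_inner_ne hΔ ha
    have hseq : s = refl a hne := eq_refl_of_isReflectionIn hne hrefl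
    subst hseq
    refine ⟨refl_inner a hne, fun b hb => ?_, fun b hb => ?_⟩
    · rw [refl_apply]; exact hΔ.reflect_mem a ha b hb
    · rw [refl_inv, refl_apply]; exact hΔ.reflect_mem a ha b hb
  | one => exact ⟨fun x y => rfl, fun a ha => ha, fun a ha => ha⟩
  | mul x y hx hy hgx hgy =>
    refine ⟨fun v w => ?_, fun a ha => ?_, fun a ha => ?_⟩
    · rw [mul_apply, mul_apply, hgx.1, hgy.1]
    · rw [mul_apply]; exact hgx.2.1 _ (hgy.2.1 a ha)
    · rw [mul_inv_rev, mul_apply]; exact hgy.2.2 _ (hgx.2.2 a ha)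
  | inv x hx hgx =>
    refine ⟨fun v w => ?_, fun a ha => hgx.2.2 a ha,
      fun a ha => by rw [inv_inv]; exact hgx.2.1 a ha⟩
    · conv_rhs => rw [← apply_inv_apply x v, ← apply_inv_apply x w]
      rw [hgx.1]

lemma refl_mem_weyl (hΔ : IsRootSystem Δ) {a : E} (ha : a ∈ Δ) :
    refl a (root_inner_ne hΔ ha) ∈ weylGroup Δ :=
  Subgroup.subset_closure ⟨a, ha, isReflectionIn_refl a _⟩

/-- Conjugation formula for reflections. -/
lemma refl_conj {g : E ≃ₗ[ℝ] E} (hg : Orth g) {a : E} (ha : ⟪a, a⟫_ℝ ≠ 0)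
    (ha' : ⟪g a, g a⟫_ℝ ≠ 0) :
    refl (g a) ha' = g * refl a ha * g⁻¹ := by
  apply LinearEquiv.toLinearMap_injective
  apply LinearMap.ext; intro x
  show refl (g a) ha' x = g (refl a ha (g⁻¹ x))
  rw [refl_apply, refl_apply, map_sub, apply_inv_apply, map_smul]
  congr 2
  rw [← coPair_map hg (g⁻¹ x) a, apply_inv_apply]

/-- The simple reflection in `sr i`. -/
def srefl (hΔ : IsRootSystem Δ) (hsr : IsBase Δ sr) (i : Fin l) : E ≃ₗ[ℝ] E :=
  refl (sr i) (root_inner_ne hΔ (hsr.mem i))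

lemma srefl_apply (hΔ : IsRootSystem Δ) (hsr : IsBase Δ sr) (i : Fin l) (x : E) :
    srefl hΔ hsr i x = x - coPair x (sr i) • sr i := rfl

lemma srefl_isSimple (hΔ : IsRootSystem Δ) (hsr : IsBase Δ sr) (i : Fin l) :
    IsSimpleReflection Δ sr (srefl hΔ hsr i) :=
  ⟨i, isReflectionIn_refl _ _⟩

lemma simple_eq_srefl (hΔ : IsRootSystem Δ) (hsr : IsBase Δ sr) {g : E ≃ₗ[ℝ] E}
    (hg : IsSimpleReflection Δ sr g) : ∃ i, g = srefl hΔ hsr i := by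
  obtain ⟨i, hi⟩ := hg
  exact ⟨i, eq_refl_of_isReflectionIn _ hi⟩

lemma simple_mem_weyl (hΔ : IsRootSystem Δ) (hsr : IsBase Δ sr) {g : E ≃ₗ[ℝ] E}
    (hg : IsSimpleReflection Δ sr g) : g ∈ weylGroup Δ := by
  obtain ⟨i, hi⟩ := hg
  exact Subgroup.subset_closure ⟨sr i, hsr.mem i, hi⟩

lemma prod_simple_mem_weyl (hΔ : IsRootSystem Δ) (hsr : IsBase Δ sr)
    {L : List (E ≃ₗ[ℝ] E)} (hL : ∀ g ∈ L, IsSimpleReflection Δ sr g) :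
    L.prod ∈ weylGroup Δ := by
  induction L with
  | nil => exact Subgroup.one_mem _
  | cons g T ih =>
    rw [List.prod_cons]
    exact Subgroup.mul_mem _ (simple_mem_weyl hΔ hsr (hL g (List.mem_cons_self)))
      (ih (fun h hh => hL h (List.mem_cons_of_mem _ hh)))

lemma co_sr (hΔ : IsRootSystem Δ) (hsr : IsBase Δ sr) (i j : Fin l) :
    co hΔ hsr (sr i) j = if j = i then 1 else 0 := by
  have : sr i = ∑ k, (fun k => if k = i then (1:ℝ) else 0) k • sr k := by
    rw [Finset.sum_eq_single i] <;> simp +contextual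
  rw [this, co_sum]

/-- A simple reflection sends a positive root other than `sr i` to a positive root. -/
lemma srefl_pos (hΔ : IsRootSystem Δ) (hsr : IsBase Δ sr) {a : E} (i : Fin l)
    (ha : IsPositiveRoot Δ sr a) (hne : a ≠ sr i) :
    IsPositiveRoot Δ sr (srefl hΔ hsr i a) := by
  have haΔ : srefl hΔ hsr i a ∈ Δ := by
    rw [srefl_apply]
    exact hΔ.reflect_mem (sr i) (hsr.mem i) a ha.1
  -- find j ≠ i with positive coordinate
  have hj : ∃ j, j ≠ i ∧ 0 < co hΔ hsr a j := by
    by_contra h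
    push_neg at h
    have hai : a = co hΔ hsr a i • sr i := by
      apply eq_of_co_eq hΔ hsr
      intro j
      rw [co_smul, co_sr]
      by_cases hji : j = i
      · subst hji; simp
      · simp only [hji, if_false, mul_zero]
        have h1 := pos_co_nonneg hΔ hsr ha j
        have h2 := h j hji
        linarith
    rcases hΔ.reduced (sr i) (hsr.mem i) (co hΔ hsr a i) (hai ▸ ha.1) with h1 | h1
    · exact hne (by rw [hai, h1, one_smul])
    · have := pos_co_nonneg hΔ hsr ha i
      rw [h1] at this; linarith
  obtain ⟨j, hji, hjpos⟩ := hj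
  have hco : co hΔ hsr (srefl hΔ hsr i a) j = co hΔ hsr a j := by
    rw [srefl_apply, co_sub, co_smul, co_sr]
    simp [hji]
  rcases pos_or_neg hΔ hsr haΔ with hp | hp
  · exact hp
  · exfalso
    have := pos_co_nonneg hΔ hsr hp j
    rw [co_neg, hco] at this
    linarith

end Weyl

section Generation

variable {Δ : Set E} {l : ℕ} {sr : Fin l → E}

lemma refl_congr {a b : E} (h : a = b) (ha : ⟪a, a⟫_ℝ ≠ 0) (hb : ⟪b, b⟫_ℝ ≠ 0) :
    refl a ha = refl b hb := by subst h; rfl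

lemma srefl_srefl (hΔ : IsRootSystem Δ) (hsr : IsBase Δ sr) (i : Fin l) (x : E) :
    srefl hΔ hsr i (srefl hΔ hsr i x) = x :=
  rmap_invol (sr i) (root_inner_ne hΔ (hsr.mem i)) x

lemma simple_sq (hΔ : IsRootSystem Δ) (hsr : IsBase Δ sr) {g : E ≃ₗ[ℝ] E}
    (hg : IsSimpleReflection Δ sr g) : g * g = 1 := by
  obtain ⟨i, rfl⟩ := simple_eq_srefl hΔ hsr hg
  exact refl_mul_self _ _

lemma simple_inv (hΔ : IsRootSystem Δ) (hsr : IsBase Δ sr) {g : E ≃ₗ[ℝ] E}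
    (hg : IsSimpleReflection Δ sr g) : g⁻¹ = g :=
  inv_eq_of_mul_eq_one_right (simple_sq hΔ hsr hg)

lemma prod_simple_inv (hΔ : IsRootSystem Δ) (hsr : IsBase Δ sr)
    {L : List (E ≃ₗ[ℝ] E)} (hL : ∀ g ∈ L, IsSimpleReflection Δ sr g) :
    (L.prod)⁻¹ = L.reverse.prod := by
  induction L with
  | nil => simp
  | cons g T ih =>
    rw [List.prod_cons, mul_inv_rev, List.reverse_cons, List.prod_append,
      ih (fun h hh => hL h (List.mem_cons_of_mem _ hh)), List.prod_singleton,
      simple_inv hΔ hsr (hL g (List.mem_cons_self))]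

/-- Reflection in a positive root is a product of simple reflections. -/
lemma refl_pos_prod_simple (hΔ : IsRootSystem Δ) (hsr : IsBase Δ sr) :
    ∀ n : ℕ, ∀ a : E, ∀ haΔ : a ∈ Δ, ∀ c : Fin l → ℕ,
    a = ∑ i, (c i : ℝ) • sr i → (∑ i, c i) = n →
    ∃ L : List (E ≃ₗ[ℝ] E), (∀ g ∈ L, IsSimpleReflection Δ sr g) ∧
      L.prod = refl a (root_inner_ne hΔ haΔ) := by
  intro n
  induction n using Nat.strong_induction_on with
  | _ n ih =>
  intro a haΔ c hc hn
  have hpos : IsPositiveRoot Δ sr a := ⟨haΔ, c, hc⟩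
  -- find j with c j > 0 and ⟪sr j, a⟫ > 0
  have hsum : (0:ℝ) < ∑ i, (c i : ℝ) * ⟪sr i, a⟫_ℝ := by
    have : ⟪a, a⟫_ℝ = ∑ i, (c i : ℝ) * ⟪sr i, a⟫_ℝ := by
      calc ⟪a, a⟫_ℝ = ⟪∑ i, (c i : ℝ) • sr i, a⟫_ℝ := by rw [← hc]
      _ = ∑ i, (c i : ℝ) * ⟪sr i, a⟫_ℝ := by
        rw [sum_inner]
        exact Finset.sum_congr rfl (fun i _ => real_inner_smul_left _ _ _)
    rw [← this]
    exact root_inner_pos hΔ haΔ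
  have hj : ∃ j, 0 < (c j : ℝ) ∧ 0 < ⟪sr j, a⟫_ℝ := by
    by_contra h
    push_neg at h
    have : ∀ i ∈ Finset.univ, (c i : ℝ) * ⟪sr i, a⟫_ℝ ≤ 0 := by
      intro i _
      by_cases hci : 0 < (c i : ℝ)
      · exact mul_nonpos_of_nonneg_of_nonpos (le_of_lt hci) (h i hci)
      · have : (c i : ℝ) = 0 := le_antisymm (not_lt.mp hci) (Nat.cast_nonneg _)
        rw [this, zero_mul]
    linarith [Finset.sum_nonpos this]
  obtain ⟨j, hcj, hja⟩ := hj
  by_cases heq : a = sr j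
  · refine ⟨[srefl hΔ hsr j], by simp [srefl_isSimple hΔ hsr j], ?_⟩
    rw [List.prod_singleton]
    exact (refl_congr heq.symm _ _)
  · -- reflect down
    have ht : 0 < coPair a (sr j) := by
      rw [coPair_eq]
      apply mul_pos
      · exact div_pos two_pos (root_inner_pos hΔ (hsr.mem j))
      · rwa [real_inner_comm]
    obtain ⟨z, hz⟩ := hΔ.integral (sr j) (hsr.mem j) a haΔ
    set a' := srefl hΔ hsr j a with ha'def
    have ha'pos : IsPositiveRoot Δ sr a' := srefl_pos hΔ hsr j hpos heq
    obtain ⟨ha'Δ, c', hc'⟩ := ha'pos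
    have hz1 : (1:ℝ) ≤ z := by
      have : (0:ℝ) < z := hz ▸ ht
      exact_mod_cast this
    -- height decreases
    have hless : (∑ i, c' i) < n := by
      have h1 : hgt hΔ hsr a' = hgt hΔ hsr a - coPair a (sr j) := by
        rw [ha'def, srefl_apply, hgt_sub, hgt_smul, hgt_sr, mul_one]
      have h2 : hgt hΔ hsr a = n := by rw [hc, hgt_sum, ← hn]; push_cast; ring
      have h3 : hgt hΔ hsr a' = ∑ i, (c' i : ℝ) := by rw [hc', hgt_sum]
      have : (∑ i, (c' i : ℝ)) ≤ (n:ℝ) - 1 := by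
        rw [← h3, h1, h2, hz]; linarith
      have : (∑ i, (c' i : ℝ)) < (n:ℝ) := by linarith
      exact_mod_cast (by push_cast at this ⊢; exact this : ((∑ i, c' i : ℕ) : ℝ) < (n:ℝ))
    obtain ⟨L', hL'simple, hL'prod⟩ := ih _ hless a' ha'Δ c' hc' rfl
    refine ⟨srefl hΔ hsr j :: (L' ++ [srefl hΔ hsr j]), ?_, ?_⟩
    · intro g hg
      rcases List.mem_cons.mp hg with rfl | hg
      · exact srefl_isSimple hΔ hsr j
      rcases List.mem_append.mp hg with hg | hg
      · exact hL'simple g hg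
      · rw [List.mem_singleton.mp hg]; exact srefl_isSimple hΔ hsr j
    · rw [List.prod_cons, List.prod_append, List.prod_singleton, hL'prod]
      have horth : Orth (srefl hΔ hsr j) := refl_inner _ _
      have hgaa : srefl hΔ hsr j a' = a := by rw [ha'def]; exact srefl_srefl hΔ hsr j a
      have hconj := refl_conj horth (root_inner_ne hΔ ha'Δ)
        (by rw [hgaa]; exact root_inner_ne hΔ haΔ)
      rw [show refl a (root_inner_ne hΔ haΔ) = refl (srefl hΔ hsr j a')
            (by rw [hgaa]; exact root_inner_ne hΔ haΔ) from refl_congr hgaa.symm _ _,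
        hconj, simple_inv hΔ hsr (srefl_isSimple hΔ hsr j)]
      group

/-- Every Weyl group element is a product of simple reflections. -/
lemma weyl_prod_simple (hΔ : IsRootSystem Δ) (hsr : IsBase Δ sr) :
    ∀ w ∈ weylGroup Δ, ∃ L : List (E ≃ₗ[ℝ] E),
      (∀ g ∈ L, IsSimpleReflection Δ sr g) ∧ L.prod = w := by
  intro w hw
  induction hw using Subgroup.closure_induction with
  | mem s hs =>
    obtain ⟨a, ha, hrefl⟩ := hs
    have hne := root_inner_ne hΔ ha
    have hseq : s = refl a hne := eq_refl_of_isReflectionIn hne hrefl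
    rcases pos_or_neg hΔ hsr ha with hp | hp
    · obtain ⟨-, c, hc⟩ := hp
      obtain ⟨L, h1, h2⟩ := refl_pos_prod_simple hΔ hsr _ a ha c hc rfl
      exact ⟨L, h1, by rw [h2, hseq]⟩
    · obtain ⟨hnaΔ, c, hc⟩ := hp
      obtain ⟨L, h1, h2⟩ := refl_pos_prod_simple hΔ hsr _ (-a) hnaΔ c hc rfl
      refine ⟨L, h1, ?_⟩
      rw [h2, hseq]
      exact refl_neg hne _
  | one => exact ⟨[], by simp, rfl⟩
  | mul x y hx hy hgx hgy =>
    obtain ⟨L1, h11, h12⟩ := hgx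
    obtain ⟨L2, h21, h22⟩ := hgy
    refine ⟨L1 ++ L2, ?_, by rw [List.prod_append, h12, h22]⟩
    intro g hg
    rcases List.mem_append.mp hg with h | h
    · exact h11 g h
    · exact h21 g h
  | inv x hx hgx =>
    obtain ⟨L, h1, h2⟩ := hgx
    refine ⟨L.reverse, fun g hg => h1 g (List.mem_reverse.mp hg), ?_⟩
    rw [← prod_simple_inv hΔ hsr h1, h2]

end Generation

section Length

variable {Δ : Set E} {l : ℕ} {sr : Fin l → E}

lemma length_le (Δ : Set E) (sr : Fin l → E) {w : E ≃ₗ[ℝ] E} {L : List (E ≃ₗ[ℝ] E)}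
    (hL : ∀ g ∈ L, IsSimpleReflection Δ sr g) (hprod : L.prod = w) :
    weylLength Δ sr w ≤ L.length :=
  Nat.sInf_le ⟨L, rfl, hL, hprod⟩

lemma exists_min_list (hΔ : IsRootSystem Δ) (hsr : IsBase Δ sr) {w : E ≃ₗ[ℝ] E}
    (hw : w ∈ weylGroup Δ) : ∃ L : List (E ≃ₗ[ℝ] E),
      (∀ g ∈ L, IsSimpleReflection Δ sr g) ∧ L.prod = w ∧
      L.length = weylLength Δ sr w := by
  obtain ⟨L0, h1, h2⟩ := weyl_prod_simple hΔ hsr w hw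
  have hne : {n | ∃ L : List (E ≃ₗ[ℝ] E), L.length = n ∧
      (∀ g ∈ L, IsSimpleReflection Δ sr g) ∧ L.prod = w}.Nonempty :=
    ⟨L0.length, L0, rfl, h1, h2⟩
  obtain ⟨L, hlen, hsimp, hprod⟩ := Nat.sInf_mem hne
  exact ⟨L, hsimp, hprod, hlen⟩

lemma length_one (Δ : Set E) (sr : Fin l → E) : weylLength Δ sr (1 : E ≃ₗ[ℝ] E) = 0 :=
  Nat.eq_zero_of_le_zero (length_le Δ sr (L := []) (by simp) rfl)

lemma eq_one_of_length_zero (hΔ : IsRootSystem Δ) (hsr : IsBase Δ sr) {w : E ≃ₗ[ℝ] E}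
    (hw : w ∈ weylGroup Δ) (h : weylLength Δ sr w = 0) : w = 1 := by
  obtain ⟨L, -, hprod, hlen⟩ := exists_min_list hΔ hsr hw
  rw [h] at hlen
  rw [← hprod, List.length_eq_zero_iff.mp hlen, List.prod_nil]

end Length

section Exchange

variable {Δ : Set E} {l : ℕ} {sr : Fin l → E}

lemma srefl_mul_self (hΔ : IsRootSystem Δ) (hsr : IsBase Δ sr) (i : Fin l) :
    srefl hΔ hsr i * srefl hΔ hsr i = 1 := refl_mul_self _ _

lemma srefl_apply_self (hΔ : IsRootSystem Δ) (hsr : IsBase Δ sr) (i : Fin l) :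
    srefl hΔ hsr i (sr i) = -sr i := refl_apply_self _ _

lemma sr_pos (hΔ : IsRootSystem Δ) (hsr : IsBase Δ sr) (i : Fin l) :
    IsPositiveRoot Δ sr (sr i) := by
  refine ⟨hsr.mem i, fun k => if k = i then 1 else 0, ?_⟩
  rw [Finset.sum_eq_single i] <;> simp +contextual

/-- The exchange lemma. -/
lemma exchange (hΔ : IsRootSystem Δ) (hsr : IsBase Δ sr) :
    ∀ L : List (E ≃ₗ[ℝ] E), (∀ g ∈ L, IsSimpleReflection Δ sr g) → ∀ i : Fin l,
    IsPositiveRoot Δ sr (-(L.prod (sr i))) →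
    ∃ L' : List (E ≃ₗ[ℝ] E), (∀ g ∈ L', IsSimpleReflection Δ sr g) ∧
      L'.prod = L.prod * srefl hΔ hsr i ∧ L'.length + 1 = L.length := by
  intro L
  induction L with
  | nil =>
    intro _ i hneg
    exfalso
    rw [List.prod_nil, one_apply] at hneg
    exact not_pos_and_neg hΔ hsr (sr_pos hΔ hsr i) hneg
  | cons g T ih =>
    intro hL i hneg
    have hgsimple := hL g (List.mem_cons_self)
    have hTsimple : ∀ h ∈ T, IsSimpleReflection Δ sr h :=
      fun h hh => hL h (List.mem_cons_of_mem _ hh)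
    obtain ⟨j, rfl⟩ := simple_eq_srefl hΔ hsr hgsimple
    have hTW : T.prod ∈ weylGroup Δ := prod_simple_mem_weyl hΔ hsr hTsimple
    have hTgood := goodW_of_mem_weyl hΔ _ hTW
    set β := T.prod (sr i) with hβdef
    have hβΔ : β ∈ Δ := hTgood.2.1 _ (hsr.mem i)
    rcases pos_or_neg hΔ hsr hβΔ with hp | hp
    · -- the head reflection sends the positive root β to a negative root, so β = sr j
      have hβj : β = sr j := by
        by_contra hne
        apply not_pos_and_neg hΔ hsr (srefl_pos hΔ hsr j hp hne)
        rw [List.prod_cons, mul_apply] at hneg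
        exact hneg
      -- conjugation
      have hconj : srefl hΔ hsr j =
          T.prod * (srefl hΔ hsr i) * (T.prod)⁻¹ := by
        have h1 : refl β (root_inner_ne hΔ hβΔ) =
            T.prod * refl (sr i) (root_inner_ne hΔ (hsr.mem i)) * (T.prod)⁻¹ :=
          refl_conj hTgood.1 _ _
        have h2 : srefl hΔ hsr j = refl β (root_inner_ne hΔ hβΔ) :=
          refl_congr hβj.symm _ _
        rw [h2, h1]; rfl
      refine ⟨T, hTsimple, ?_, by simp [List.length_cons]⟩
      rw [List.prod_cons, hconj]
      have : T.prod * srefl hΔ hsr i * (T.prod)⁻¹ * T.prod * srefl hΔ hsr i =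
          T.prod * (srefl hΔ hsr i * srefl hΔ hsr i) := by group
      rw [mul_assoc _ T.prod (srefl hΔ hsr i), ← mul_assoc, this,
        srefl_mul_self, mul_one]
    · -- recurse into the tail
      have hneg' : IsPositiveRoot Δ sr (-(T.prod (sr i))) := hp
      obtain ⟨T', h1, h2, h3⟩ := ih hTsimple i hneg'
      refine ⟨srefl hΔ hsr j :: T', ?_, ?_, ?_⟩
      · intro h hh
        rcases List.mem_cons.mp hh with rfl | hh
        · exact hgsimple
        · exact h1 h hh
      · rw [List.prod_cons, h2, List.prod_cons, mul_assoc]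
      · simp only [List.length_cons]
        omega

lemma descent_lt (hΔ : IsRootSystem Δ) (hsr : IsBase Δ sr) {w : E ≃ₗ[ℝ] E}
    (hw : w ∈ weylGroup Δ) (i : Fin l) (hneg : IsPositiveRoot Δ sr (-(w (sr i)))) :
    weylLength Δ sr (w * srefl hΔ hsr i) + 1 ≤ weylLength Δ sr w := by
  obtain ⟨L, hsimp, hprod, hlen⟩ := exists_min_list hΔ hsr hw
  rw [← hprod] at hneg
  obtain ⟨L', h1, h2, h3⟩ := exchange hΔ hsr L hsimp i hneg
  have := length_le Δ sr h1 (by rw [h2, hprod])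
  omega

lemma ascent_lt (hΔ : IsRootSystem Δ) (hsr : IsBase Δ sr) {w : E ≃ₗ[ℝ] E}
    (hw : w ∈ weylGroup Δ) (i : Fin l) (hpos : IsPositiveRoot Δ sr (w (sr i))) :
    weylLength Δ sr w < weylLength Δ sr (w * srefl hΔ hsr i) := by
  set w' := w * srefl hΔ hsr i with hw'def
  have hw'W : w' ∈ weylGroup Δ :=
    Subgroup.mul_mem _ hw (simple_mem_weyl hΔ hsr (srefl_isSimple hΔ hsr i))
  have hneg : IsPositiveRoot Δ sr (-(w' (sr i))) := by
    have : w' (sr i) = w (srefl hΔ hsr i (sr i)) := rfl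
    rw [this, srefl_apply_self, map_neg, neg_neg]
    exact hpos
  have := descent_lt hΔ hsr hw'W i hneg
  have hww : w' * srefl hΔ hsr i = w := by
    rw [hw'def, mul_assoc, srefl_mul_self, mul_one]
  rw [hww] at this
  omega

lemma exists_descent (hΔ : IsRootSystem Δ) (hsr : IsBase Δ sr) {w : E ≃ₗ[ℝ] E}
    (hw : w ∈ weylGroup Δ) (hne : w ≠ 1) :
    ∃ i : Fin l, IsPositiveRoot Δ sr (-(w (sr i))) := by
  obtain ⟨L, hsimp, hprod, hlen⟩ := exists_min_list hΔ hsr hw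
  rcases L.eq_nil_or_concat with rfl | ⟨T, g, rfl⟩
  · exact absurd ((List.prod_nil).symm.trans hprod).symm hne
  · have hgsimple := hsimp g (by simp)
    obtain ⟨j, rfl⟩ := simple_eq_srefl hΔ hsr hgsimple
    refine ⟨j, ?_⟩
    have hwj : w (sr j) ∈ Δ := (goodW_of_mem_weyl hΔ w hw).2.1 _ (hsr.mem j)
    rcases pos_or_neg hΔ hsr hwj with hp | hp
    · exfalso
      have hasc := ascent_lt hΔ hsr hw j hp
      have hTsimple : ∀ h ∈ T, IsSimpleReflection Δ sr h := by
        intro h hh; exact hsimp h (by simp [hh])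
      have hws : w * srefl hΔ hsr j = T.prod := by
        rw [← hprod, List.concat_eq_append, List.prod_append, List.prod_singleton,
          mul_assoc, srefl_mul_self, mul_one]
      rw [hws] at hasc
      have hTle : weylLength Δ sr T.prod ≤ T.length := length_le Δ sr hTsimple rfl
      have hlen' : T.length + 1 = weylLength Δ sr w := by
        rw [← hlen, List.concat_eq_append, List.length_append, List.length_singleton]
      omega
    · exact hp

end Exchange

section Minuscule

variable {Δ : Set E} {l : ℕ} {sr : Fin l → E} {lam : E}

lemma inner_nonneg_of_coPair {x a : E} (h : 0 ≤ coPair x a) (hpos : 0 < ⟪a, a⟫_ℝ) :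
    0 ≤ ⟪x, a⟫_ℝ := by
  have he : ⟪x, a⟫_ℝ = coPair x a * ⟪a, a⟫_ℝ / 2 := by
    unfold coPair; field_simp
  rw [he]
  apply div_nonneg (mul_nonneg h hpos.le) two_pos.le

lemma dominant_inner_sr (hΔ : IsRootSystem Δ) (hsr : IsBase Δ sr)
    (hdom : IsDominant Δ sr lam) (i : Fin l) : 0 ≤ ⟪lam, sr i⟫_ℝ :=
  inner_nonneg_of_coPair (hdom.2 i) (root_inner_pos hΔ (hsr.mem i))

lemma dominant_coPair_nonneg (hΔ : IsRootSystem Δ) (hsr : IsBase Δ sr)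
    (hdom : IsDominant Δ sr lam) {a : E} (ha : IsPositiveRoot Δ sr a) :
    0 ≤ coPair lam a := by
  obtain ⟨haΔ, c, hc⟩ := ha
  rw [coPair_eq]
  apply mul_nonneg (div_nonneg two_pos.le (root_inner_pos hΔ haΔ).le)
  calc (0:ℝ) ≤ ∑ i, (c i : ℝ) * ⟪lam, sr i⟫_ℝ :=
        Finset.sum_nonneg (fun i _ => mul_nonneg (Nat.cast_nonneg _)
          (dominant_inner_sr hΔ hsr hdom i))
  _ = ⟪lam, a⟫_ℝ := by
      rw [hc, inner_sum]
      exact (Finset.sum_congr rfl (fun i _ => (real_inner_smul_right _ _ _))).symm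

lemma minuscule_coPair_bound (hΔ : IsRootSystem Δ) (hsr : IsBase Δ sr)
    (hlam : IsMinuscule Δ sr lam) {b : E} (hb : b ∈ Δ) :
    -1 ≤ coPair lam b ∧ coPair lam b ≤ 1 := by
  rcases pos_or_neg hΔ hsr hb with hp | hp
  · exact ⟨le_trans (by norm_num) (dominant_coPair_nonneg hΔ hsr hlam.1 hp),
      hlam.2 b hp⟩
  · have hbeq : b = -(-b) := by rw [neg_neg]
    rw [hbeq, coPair_neg_right]
    constructor
    · have := hlam.2 (-b) hp; linarith
    · have := dominant_coPair_nonneg hΔ hsr hlam.1 hp; linarith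

lemma orbit_coPair_bound (hΔ : IsRootSystem Δ) (hsr : IsBase Δ sr)
    (hlam : IsMinuscule Δ sr lam) {w : E ≃ₗ[ℝ] E} (hw : w ∈ weylGroup Δ)
    {b : E} (hb : b ∈ Δ) :
    -1 ≤ coPair (w lam) b ∧ coPair (w lam) b ≤ 1 := by
  have hgood := goodW_of_mem_weyl hΔ w hw
  rw [coPair_map' hgood.1]
  exact minuscule_coPair_bound hΔ hsr hlam (hgood.2.2 b hb)

lemma orbit_coPair_int (hΔ : IsRootSystem Δ) (hsr : IsBase Δ sr)
    (hlam : IsMinuscule Δ sr lam) {w : E ≃ₗ[ℝ] E} (hw : w ∈ weylGroup Δ)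
    {b : E} (hb : b ∈ Δ) : ∃ z : ℤ, coPair (w lam) b = z := by
  have hgood := goodW_of_mem_weyl hΔ w hw
  rw [coPair_map' hgood.1]
  exact hlam.1.1 _ (hgood.2.2 b hb)

/-- `lam - w lam` is a nonnegative integer combination of simple roots. -/
lemma lam_sub_w_lam (hΔ : IsRootSystem Δ) (hsr : IsBase Δ sr)
    (hdom : IsDominant Δ sr lam) :
    ∀ n : ℕ, ∀ w ∈ weylGroup Δ, weylLength Δ sr w ≤ n →
    ∃ d : Fin l → ℕ, lam - w lam = ∑ i, (d i : ℝ) • sr i := by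
  intro n
  induction n with
  | zero =>
    intro w hw hlen
    have : w = 1 := eq_one_of_length_zero hΔ hsr hw (Nat.le_zero.mp hlen)
    subst this
    exact ⟨0, by simp [one_apply]⟩
  | succ n ih =>
    intro w hw hlen
    by_cases hone : w = 1
    · subst hone; exact ⟨0, by simp [one_apply]⟩
    · obtain ⟨i, hi⟩ := exists_descent hΔ hsr hw hone
      have hdesc := descent_lt hΔ hsr hw i hi
      set w' := w * srefl hΔ hsr i with hw'def
      have hw'W : w' ∈ weylGroup Δ :=
        Subgroup.mul_mem _ hw (simple_mem_weyl hΔ hsr (srefl_isSimple hΔ hsr i))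
      obtain ⟨d', hd'⟩ := ih w' hw'W (by omega)
      obtain ⟨z, hz⟩ := hdom.1 (sr i) (hsr.mem i)
      have hz0 : 0 ≤ z := by
        have := hdom.2 i
        rw [hz] at this
        exact_mod_cast this
      obtain ⟨p, e, hpe⟩ := hi
      have hwlam : w lam = w' lam - (z : ℝ) • (-(w (sr i))) := by
        have h1 : w lam = w' (srefl hΔ hsr i lam) := by
          rw [hw'def, mul_apply, srefl_srefl]
        rw [h1, srefl_apply, map_sub, map_smul, hz]
        have h2 : w' (sr i) = -(w (sr i)) := by
          rw [hw'def, mul_apply, srefl_apply_self, map_neg]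
        rw [h2, smul_neg, sub_neg_eq_add]
      refine ⟨fun j => d' j + z.toNat * e j, ?_⟩
      have : lam - w lam = (lam - w' lam) + (z:ℝ) • (-(w (sr i))) := by
        rw [hwlam]; abel
      rw [this, hd', hpe, Finset.smul_sum, ← Finset.sum_add_distrib]
      apply Finset.sum_congr rfl
      intro j _
      have hzt : ((z.toNat : ℕ) : ℝ) = (z : ℝ) := by
        have h := Int.toNat_of_nonneg hz0
        exact_mod_cast congrArg (fun t : ℤ => (t : ℝ)) h
      have hsc : ((d' j : ℝ) + (z:ℝ) * (e j : ℝ)) = ((d' j + z.toNat * e j : ℕ) : ℝ) := by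
        push_cast
        rw [hzt]
      rw [smul_smul, ← add_smul, hsc]

/-- Stabilizer of `lam` in the Weyl group lies in the parabolic subgroup. -/
lemma stab_mem_parabolic (hΔ : IsRootSystem Δ) (hsr : IsBase Δ sr)
    (hdom : IsDominant Δ sr lam) :
    ∀ n : ℕ, ∀ v ∈ weylGroup Δ, weylLength Δ sr v ≤ n → v lam = lam →
    v ∈ parabolic Δ sr lam := by
  intro n
  induction n with
  | zero =>
    intro v hv hlen _
    have : v = 1 := eq_one_of_length_zero hΔ hsr hv (Nat.le_zero.mp hlen)
    subst this
    exact Subgroup.one_mem _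
  | succ n ih =>
    intro v hv hlen hfix
    by_cases hone : v = 1
    · subst hone; exact Subgroup.one_mem _
    · obtain ⟨i, hi⟩ := exists_descent hΔ hsr hv hone
      have hgood := goodW_of_mem_weyl hΔ v hv
      have hc0 : coPair lam (sr i) = 0 := by
        have h1 : coPair (v lam) (v (sr i)) = coPair lam (sr i) :=
          coPair_map hgood.1 lam (sr i)
        rw [hfix] at h1
        have h2 : coPair lam (v (sr i)) ≤ 0 := by
          have h3 : v (sr i) = -(-(v (sr i))) := by rw [neg_neg]
          rw [h3, coPair_neg_right]
          have := dominant_coPair_nonneg hΔ hsr hdom hi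
          linarith
        have h4 := dominant_coPair_nonneg hΔ hsr hdom (sr_pos hΔ hsr i)
        linarith [h1 ▸ h2]
      have hsilam : srefl hΔ hsr i lam = lam := by
        rw [srefl_apply, hc0, zero_smul, sub_zero]
      have hdesc := descent_lt hΔ hsr hv i hi
      set v' := v * srefl hΔ hsr i with hv'def
      have hv'W : v' ∈ weylGroup Δ :=
        Subgroup.mul_mem _ hv (simple_mem_weyl hΔ hsr (srefl_isSimple hΔ hsr i))
      have hv'fix : v' lam = lam := by
        rw [hv'def, mul_apply, hsilam, hfix]
      have hv'P : v' ∈ parabolic Δ sr lam := ih v' hv'W (by omega) hv'fix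
      have hsiP : srefl hΔ hsr i ∈ parabolic Δ sr lam :=
        Subgroup.subset_closure ⟨i, hc0, isReflectionIn_refl _ _⟩
      have : v = v' * srefl hΔ hsr i := by
        rw [hv'def, mul_assoc, srefl_mul_self, mul_one]
      rw [this]
      exact Subgroup.mul_mem _ hv'P hsiP

/-- Each simple reflection changes the height of an orbit element by at most 1. -/
lemma hgt_drop_le (hΔ : IsRootSystem Δ) (hsr : IsBase Δ sr)
    (hlam : IsMinuscule Δ sr lam) :
    ∀ L : List (E ≃ₗ[ℝ] E), (∀ g ∈ L, IsSimpleReflection Δ sr g) →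
    ∀ w ∈ weylGroup Δ,
    hgt hΔ hsr (w lam) - hgt hΔ hsr ((L.prod * w) lam) ≤ (L.length : ℝ) := by
  intro L
  induction L with
  | nil =>
    intro _ w _
    simp [one_mul, le_refl]
  | cons g T ih =>
    intro hL w hw
    obtain ⟨i, rfl⟩ := simple_eq_srefl hΔ hsr (hL g (List.mem_cons_self))
    have hTsimple : ∀ h ∈ T, IsSimpleReflection Δ sr h :=
      fun h hh => hL h (List.mem_cons_of_mem _ hh)
    have hTW : T.prod * w ∈ weylGroup Δ :=
      Subgroup.mul_mem _ (prod_simple_mem_weyl hΔ hsr hTsimple) hw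
    set y := (T.prod * w) lam with hydef
    have hstep : hgt hΔ hsr y - hgt hΔ hsr (srefl hΔ hsr i y) ≤ 1 := by
      rw [srefl_apply, hgt_sub, hgt_smul, hgt_sr, mul_one]
      have := (orbit_coPair_bound hΔ hsr hlam hTW (hsr.mem i)).2
      rw [hydef]
      linarith
    have hih := ih hTsimple w hw
    have hprod : ((srefl hΔ hsr i :: T).prod * w) lam = srefl hΔ hsr i y := by
      rw [List.prod_cons, mul_assoc, mul_apply, hydef]
    rw [hprod, List.length_cons]
    push_cast
    linarith

end Minuscule

section Walk

variable {Δ : Set E} {l : ℕ} {sr : Fin l → E} {lam : E}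

lemma walk (hΔ : IsRootSystem Δ) (hsr : IsBase Δ sr) (hlam : IsMinuscule Δ sr lam) :
    ∀ n : ℕ, ∀ w ∈ weylGroup Δ, ∀ d : Fin l → ℕ,
    lam - w lam = ∑ i, (d i : ℝ) • sr i → (∑ i, d i) = n →
    ∃ M : List (E ≃ₗ[ℝ] E), (∀ g ∈ M, IsSimpleReflection Δ sr g) ∧
      M.length = n ∧ M.prod (w lam) = lam := by
  intro n
  induction n using Nat.strong_induction_on with
  | _ n ih =>
  intro w hw d hd hn
  have hgood := goodW_of_mem_weyl hΔ w hw
  by_cases hfix : w lam = lam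
  · -- d must be zero
    have hzero : ∀ i, (d i : ℝ) = 0 := by
      have h0 : ∑ i, (d i : ℝ) • sr i = 0 := by rw [← hd, hfix, sub_self]
      have := linearIndependent_iff'.mp hsr.indep Finset.univ
        (fun i => (d i : ℝ)) h0
      intro i; exact this i (Finset.mem_univ i)
    have hn0 : n = 0 := by
      rw [← hn]
      have : ∀ i, d i = 0 := fun i => Nat.cast_injective (by rw [hzero i]; norm_num)
      simp [this]
    exact ⟨[], by simp, by simp [hn0], by rw [List.prod_nil, one_apply, hfix]⟩
  · -- find a simple root with negative pairing
    have hneg : ∃ i, coPair (w lam) (sr i) < 0 := by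
      by_contra h
      push_neg at h
      apply hfix
      have hinner : ∀ i, 0 ≤ ⟪w lam, sr i⟫_ℝ := fun i =>
        inner_nonneg_of_coPair (h i) (root_inner_pos hΔ (hsr.mem i))
      have hinner2 : ∀ i, 0 ≤ ⟪lam, sr i⟫_ℝ := dominant_inner_sr hΔ hsr hlam.1
      have e1 : ⟪lam - w lam, lam + w lam⟫_ℝ = 0 := by
        rw [inner_add_right, inner_sub_left, inner_sub_left]
        have : ⟪w lam, w lam⟫_ℝ = ⟪lam, lam⟫_ℝ := hgood.1 lam lam
        rw [this, real_inner_comm (w lam) lam]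
        ring
      have e2 : 0 ≤ ⟪lam - w lam, lam⟫_ℝ := by
        rw [hd, sum_inner]
        apply Finset.sum_nonneg
        intro i _
        rw [real_inner_smul_left]
        exact mul_nonneg (Nat.cast_nonneg _) (by rw [real_inner_comm]; exact hinner2 i)
      have e3 : 0 ≤ ⟪lam - w lam, w lam⟫_ℝ := by
        rw [hd, sum_inner]
        apply Finset.sum_nonneg
        intro i _
        rw [real_inner_smul_left]
        exact mul_nonneg (Nat.cast_nonneg _) (by rw [real_inner_comm]; exact hinner i)
      have e4 : ⟪lam - w lam, lam - w lam⟫_ℝ = 0 := by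
        rw [inner_sub_right]
        rw [inner_add_right] at e1
        linarith
      have := inner_self_eq_zero.mp e4
      rw [sub_eq_zero] at this
      exact this.symm
    obtain ⟨i, hilt⟩ := hneg
    -- the pairing is exactly -1
    have hm1 : coPair (w lam) (sr i) = -1 := by
      obtain ⟨z, hz⟩ := orbit_coPair_int hΔ hsr hlam hw (hsr.mem i)
      have hlb := (orbit_coPair_bound hΔ hsr hlam hw (hsr.mem i)).1
      rw [hz] at hilt hlb ⊢
      have : z = -1 := by
        have h1 : z < 0 := by exact_mod_cast hilt
        have h2 : (-1 : ℤ) ≤ z := by exact_mod_cast hlb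
        omega
      rw [this]; norm_num
    set w' := srefl hΔ hsr i * w with hw'def
    have hw'W : w' ∈ weylGroup Δ :=
      Subgroup.mul_mem _ (simple_mem_weyl hΔ hsr (srefl_isSimple hΔ hsr i)) hw
    have hw'lam : w' lam = w lam + sr i := by
      rw [hw'def, mul_apply, srefl_apply, hm1, neg_one_smul, sub_neg_eq_add]
    -- coefficients for w'
    obtain ⟨d', hd'⟩ := lam_sub_w_lam hΔ hsr hlam.1 (weylLength Δ sr w') w' hw'W le_rfl
    have hsum' : (∑ j, (d' j : ℝ)) = (n : ℝ) - 1 := by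
      have h1 : hgt hΔ hsr (lam - w' lam) = ∑ j, (d' j : ℝ) := by
        rw [hd', hgt_sum]
      have h2 : hgt hΔ hsr (lam - w lam) = (n : ℝ) := by
        rw [hd, hgt_sum, ← hn]; push_cast; ring
      have h3 : lam - w' lam = (lam - w lam) - sr i := by
        rw [hw'lam]; abel
      rw [h3, hgt_sub, h2] at h1
      rw [← h1, hgt_sr]
    have hlt : (∑ j, d' j) < n := by
      have h4 : ((∑ j, d' j : ℕ) : ℝ) = (n : ℝ) - 1 := by
        push_cast
        exact hsum'
      have h5 : 1 ≤ n := by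
        rcases Nat.eq_zero_or_pos n with rfl | h
        · exfalso
          have hnn : (0:ℝ) ≤ ((∑ j, d' j : ℕ) : ℝ) := Nat.cast_nonneg _
          rw [h4] at hnn
          norm_num at hnn
        · exact h
      have h6 : (1:ℝ) ≤ (n:ℝ) := by exact_mod_cast h5
      have : ((∑ j, d' j : ℕ) : ℝ) < (n : ℝ) := by rw [h4]; linarith
      exact_mod_cast this
    obtain ⟨M', hM'simple, hM'len, hM'prod⟩ := ih _ hlt w' hw'W d' hd' rfl
    refine ⟨M' ++ [srefl hΔ hsr i], ?_, ?_, ?_⟩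
    · intro g hg
      rcases List.mem_append.mp hg with hg | hg
      · exact hM'simple g hg
      · rw [List.mem_singleton.mp hg]; exact srefl_isSimple hΔ hsr i
    · rw [List.length_append, List.length_singleton, hM'len]
      have : (∑ j, d' j) = n - 1 := by
        have : ((∑ j, d' j : ℕ) : ℝ) = ((n - 1 : ℕ) : ℝ) := by
          push_cast [Nat.cast_sub (by omega : 1 ≤ n)]
          exact hsum'
        exact_mod_cast this
      omega
    · rw [List.prod_append, List.prod_singleton, mul_apply]
      have : srefl hΔ hsr i (w lam) = w' lam := by rw [hw'def, mul_apply]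
      rw [this, hM'prod]

lemma parabolic_le_weyl (Δ : Set E) (sr : Fin l → E) (lam : E) (hsr : IsBase Δ sr) :
    parabolic Δ sr lam ≤ weylGroup Δ := by
  apply (Subgroup.closure_le _).mpr
  rintro g ⟨i, -, hrefl⟩
  exact Subgroup.subset_closure ⟨sr i, hsr.mem i, hrefl⟩

lemma parabolic_fix (lam : E) : ∀ v ∈ parabolic Δ sr lam, v lam = lam := by
  intro v hv
  induction hv using Subgroup.closure_induction with
  | mem s hs =>
    obtain ⟨i, hc0, hrefl⟩ := hs
    rw [hrefl lam, hc0, zero_smul, sub_zero]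
  | one => rfl
  | mul x y hx hy hgx hgy => rw [mul_apply, hgy, hgx]
  | inv x hx hgx =>
    conv_lhs => rw [← hgx]
    exact inv_apply_apply x lam

/-- The coset length equals the height drop. -/
lemma cosetLength_eq (hΔ : IsRootSystem Δ) (hsr : IsBase Δ sr)
    (hlam : IsMinuscule Δ sr lam) {w : E ≃ₗ[ℝ] E} (hw : w ∈ weylGroup Δ) :
    ((cosetLength Δ sr lam w : ℕ) : ℝ) = hgt hΔ hsr lam - hgt hΔ hsr (w lam) := by
  obtain ⟨d, hd⟩ := lam_sub_w_lam hΔ hsr hlam.1 (weylLength Δ sr w) w hw le_rfl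
  set N := ∑ i, d i with hN
  have hval : hgt hΔ hsr lam - hgt hΔ hsr (w lam) = (N : ℝ) := by
    rw [← hgt_sub, hd, hgt_sum, hN]; push_cast; ring
  rw [hval]
  norm_cast
  -- upper bound
  obtain ⟨M, hMsimple, hMlen, hMprod⟩ := walk hΔ hsr hlam N w hw d hd rfl
  have hMW : M.prod ∈ weylGroup Δ := prod_simple_mem_weyl hΔ hsr hMsimple
  set v := w⁻¹ * (M.prod)⁻¹ with hvdef
  have hvW : v ∈ weylGroup Δ :=
    Subgroup.mul_mem _ (Subgroup.inv_mem _ hw) (Subgroup.inv_mem _ hMW)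
  have hvfix : v lam = lam := by
    have h1 : (M.prod)⁻¹ lam = w lam := by
      have := congrArg (fun x => (M.prod)⁻¹ x) hMprod
      simpa [inv_apply_apply] using this.symm
    rw [hvdef, mul_apply, h1, inv_apply_apply]
  have hvP : v ∈ parabolic Δ sr lam :=
    stab_mem_parabolic hΔ hsr hlam.1 (weylLength Δ sr v) v hvW le_rfl hvfix
  have hwv : w * v = (M.prod)⁻¹ := by
    rw [hvdef, ← mul_assoc, mul_inv_cancel, one_mul]
  have hlwv : weylLength Δ sr (w * v) ≤ N := by
    rw [hwv, prod_simple_inv hΔ hsr hMsimple]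
    have := length_le Δ sr (fun g hg => hMsimple g (List.mem_reverse.mp hg)) rfl
    rwa [List.length_reverse, hMlen] at this
  have hub : cosetLength Δ sr lam w ≤ N :=
    le_trans (Nat.sInf_le ⟨v, hvP, rfl⟩) hlwv
  -- lower bound
  have hne : {n | ∃ v' ∈ parabolic Δ sr lam, n = weylLength Δ sr (w * v')}.Nonempty :=
    ⟨weylLength Δ sr (w * 1), 1, Subgroup.one_mem _, rfl⟩
  have hmem : ∃ v' ∈ parabolic Δ sr lam,
      cosetLength Δ sr lam w = weylLength Δ sr (w * v') := Nat.sInf_mem hne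
  obtain ⟨v₀, hv₀P, hv₀⟩ := hmem
  have hv₀W : v₀ ∈ weylGroup Δ := parabolic_le_weyl Δ sr lam hsr hv₀P
  have hwv₀W : w * v₀ ∈ weylGroup Δ := Subgroup.mul_mem _ hw hv₀W
  obtain ⟨L, hLs, hLp, hLl⟩ := exists_min_list hΔ hsr hwv₀W
  have hdrop := hgt_drop_le hΔ hsr hlam L hLs 1 (Subgroup.one_mem _)
  have h1lam : (1 : E ≃ₗ[ℝ] E) lam = lam := rfl
  have hLw : (L.prod * 1) lam = w lam := by
    rw [mul_one, hLp, mul_apply, parabolic_fix lam v₀ hv₀P]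
  rw [h1lam, hLw] at hdrop
  have hlb : (N : ℝ) ≤ (cosetLength Δ sr lam w : ℝ) := by
    rw [hv₀, ← hLl]
    rw [hval] at hdrop
    exact hdrop
  have hlbn : N ≤ cosetLength Δ sr lam w := by exact_mod_cast hlb
  omega

end Walk

end LDH

/-- If `lam` is minuscule, `u ∈ W^P`, and `a` is a positive root whose reflection `s`
satisfies `ℓ(s u) = ℓ(u) - (cox - 1)` where `cox` is the Coxeter number, then `a = ψ`,
the highest root, and `(u(lam), ψ^∨) = -1`. -/
theorem length_drop_implies_highest_root
    {E : Type*} [NormedAddCommGroup E] [InnerProductSpace ℝ E]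
    (Δ : Set E) {l : ℕ} (sr : Fin l → E)
    (hΔ : IsRootSystem Δ) (hsr : IsBase Δ sr)
    (lam : E) (hlam : IsMinuscule Δ sr lam)
    (ψ : E) (hψ : IsHighestRoot Δ sr ψ)
    (q : Fin l → ℕ) (hq : ψ = ∑ j, (q j : ℝ) • sr j)
    (cox : ℕ) (hcox : cox = 1 + ∑ j, q j)
    (u : E ≃ₗ[ℝ] E) (hu : IsMinRep Δ sr lam u)
    (a : E) (ha : IsPositiveRoot Δ sr a)
    (s : E ≃ₗ[ℝ] E) (hs : IsReflectionIn a s)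
    (hlen : cosetLength Δ sr lam (s * u) + (cox - 1) = cosetLength Δ sr lam u) :
    a = ψ ∧ coPair (u lam) ψ = -1 := by
  have huW : u ∈ weylGroup Δ := hu.1
  have haΔ : a ∈ Δ := ha.1
  have hane := LDH.root_inner_ne hΔ haΔ
  have hseq : s = LDH.refl a hane := LDH.eq_refl_of_isReflectionIn hane hs
  have hsW : s ∈ weylGroup Δ := by rw [hseq]; exact LDH.refl_mem_weyl hΔ haΔ
  have hsuW : s * u ∈ weylGroup Δ := Subgroup.mul_mem _ hsW huW
  have h1 := LDH.cosetLength_eq hΔ hsr hlam huW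
  have h2 := LDH.cosetLength_eq hΔ hsr hlam hsuW
  have hcast : ((cosetLength Δ sr lam (s * u) : ℕ) : ℝ) + (((cox - 1 : ℕ)) : ℝ) =
      ((cosetLength Δ sr lam u : ℕ) : ℝ) := by exact_mod_cast congrArg (Nat.cast (R := ℝ)) hlen
  have hq1 : (cox - 1 : ℕ) = ∑ j, q j := by omega
  have hpsi : (((∑ j, q j : ℕ)) : ℝ) = LDH.hgt hΔ hsr ψ := by
    rw [hq, LDH.hgt_sum]; push_cast; ring
  set t := coPair (u lam) a with htdef
  have hsulam : (s * u) lam = u lam - t • a := by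
    have : (s * u) lam = s (u lam) := rfl
    rw [this, hs (u lam)]
  have hH : LDH.hgt hΔ hsr ((s * u) lam) = LDH.hgt hΔ hsr (u lam) - t * LDH.hgt hΔ hsr a := by
    rw [hsulam, LDH.hgt_sub, LDH.hgt_smul]
  -- key equation : -t * hgt a = hgt ψ
  have hkey : -t * LDH.hgt hΔ hsr a = LDH.hgt hΔ hsr ψ := by
    rw [hq1, hpsi] at hcast
    rw [h1, h2, hH] at hcast
    linarith
  have htb := LDH.orbit_coPair_bound hΔ hsr hlam huW haΔ
  have hHa1 : 1 ≤ LDH.hgt hΔ hsr a := LDH.one_le_hgt_pos hΔ hsr ha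
  obtain ⟨c, hcc⟩ := hψ.2 a ha
  have hgap : LDH.hgt hΔ hsr ψ - LDH.hgt hΔ hsr a = ∑ j, (c j : ℝ) := by
    rw [← LDH.hgt_sub, hcc, LDH.hgt_sum]
  have hgap0 : 0 ≤ LDH.hgt hΔ hsr ψ - LDH.hgt hΔ hsr a := by
    rw [hgap]
    exact Finset.sum_nonneg (fun j _ => Nat.cast_nonneg _)
  -- hgt ψ ≤ hgt a
  have hle : LDH.hgt hΔ hsr ψ ≤ LDH.hgt hΔ hsr a := by
    have h3 : -t ≤ 1 := by linarith [htb.1]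
    calc LDH.hgt hΔ hsr ψ = -t * LDH.hgt hΔ hsr a := hkey.symm
    _ ≤ 1 * LDH.hgt hΔ hsr a := by
        apply mul_le_mul_of_nonneg_right h3
        linarith
    _ = LDH.hgt hΔ hsr a := one_mul _
  have heq : LDH.hgt hΔ hsr ψ = LDH.hgt hΔ hsr a := le_antisymm hle (by linarith)
  -- a = ψ
  have hsum0 : ∑ j, (c j : ℝ) = 0 := by rw [← hgap, heq]; ring
  have hc0 : ∀ j ∈ Finset.univ, (c j : ℝ) = 0 :=
    (Finset.sum_eq_zero_iff_of_nonneg (fun j _ => Nat.cast_nonneg _)).mp hsum0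
  have haψ : a = ψ := by
    have : ψ - a = 0 := by
      rw [hcc]
      apply Finset.sum_eq_zero
      intro j hj
      rw [hc0 j hj, zero_smul]
    have := sub_eq_zero.mp this
    exact this.symm
  -- t = -1
  have htm1 : t = -1 := by
    have h4 : -t * LDH.hgt hΔ hsr a = LDH.hgt hΔ hsr a := by rw [hkey, heq]
    have h5 : (-t - 1) * LDH.hgt hΔ hsr a = 0 := by ring_nf; linarith
    rcases mul_eq_zero.mp h5 with h6 | h6
    · linarith
    · linarith
  refine ⟨haψ, ?_⟩
  rw [← haψ, ← htdef, htm1]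
end
end
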